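/- arXiv:1810.03553 — 4 statements merged into one kernel-verified Lean document; each statement's English description precedes it below -/
import Mathlib

section
/- Suppose 𝒜₀ is injective, S is a strongly continuous semigroup on H generated by 𝒜₀, and for every X₀ ∈ D(𝒜), every twice continuously differentiable d : [0,∞) → ℂ^m and every continuously differentiable U : [0,∞) → H with ℬ X₀ = d(0), a classical solution associated with (X₀, d, U) exists. Then for every such (X₀, d, U) and every map X : [0,∞) → H, X is a classical solution associated with (X₀, d, U) if and only if X is a weak solution associated with (X₀, d, U). -/
noncomputable section

local notation "⟪" x ", " y "⟫" => @inner ℂ _ _ x y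

/-- `f` is linear on the subset `s`. -/
def IsLinearOn {H K : Type*} [AddCommGroup H] [Module ℂ H] [AddCommGroup K] [Module ℂ K]
    (f : H → K) (s : Set H) : Prop :=
  (∀ x ∈ s, ∀ y ∈ s, f (x + y) = f x + f y) ∧ ∀ (c : ℂ), ∀ x ∈ s, f (c • x) = c • f x

/-- `X` is a classical solution of the boundary control system `(A, Bop)` with domain `domA`,
associated with initial condition `X0`, boundary disturbance `d` and distributed
disturbance `U`. -/
def IsClassicalSolution {H : Type*} [NormedAddCommGroup H] [NormedSpace ℂ H] {m : ℕ}
    (A : H → H) (Bop : H → EuclideanSpace ℂ (Fin m)) (domA : Set H)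
    (X0 : H) (d : ℝ → EuclideanSpace ℂ (Fin m)) (U : ℝ → H) (X : ℝ → H) : Prop :=
  ContinuousOn X (Set.Ici 0) ∧
  (∀ t ∈ Set.Ici (0:ℝ), X t ∈ domA) ∧
  ContinuousOn (fun t => A (X t)) (Set.Ici 0) ∧
  (∀ t ∈ Set.Ici (0:ℝ), HasDerivWithinAt X (A (X t) + U t) (Set.Ici 0) t) ∧
  X 0 = X0 ∧
  ∀ t ∈ Set.Ici (0:ℝ), Bop (X t) = d t

/-- `X` is a weak solution of the boundary control system, associated with `(X0, d, U)`:
for every `T > 0` and every test function `z` over `[0, T]` (continuously differentiable,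
valued in the domain `domAstar` of the adjoint `Astar` of the disturbance-free operator,
with `Astar ∘ z` continuous and `z T = 0`) the variational identity holds. -/
def IsWeakSolution {H : Type*} [NormedAddCommGroup H] [InnerProductSpace ℂ H] {m : ℕ}
    (A : H → H) (domAstar : Set H) (Astar : H → H)
    (B : EuclideanSpace ℂ (Fin m) →L[ℂ] H)
    (X0 : H) (d : ℝ → EuclideanSpace ℂ (Fin m)) (U : ℝ → H) (X : ℝ → H) : Prop :=
  ContinuousOn X (Set.Ici 0) ∧
  ∀ T > (0:ℝ), ∀ z z' : ℝ → H,
    (∀ t ∈ Set.Icc (0:ℝ) T, z t ∈ domAstar) →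
    (∀ t ∈ Set.Icc (0:ℝ) T, HasDerivWithinAt z (z' t) (Set.Icc 0 T) t) →
    ContinuousOn z' (Set.Icc 0 T) →
    ContinuousOn (fun t => Astar (z t)) (Set.Icc 0 T) →
    z T = 0 →
    (∫ t in (0:ℝ)..T, ⟪Astar (z t) + z' t, X t⟫) =
      -⟪z 0, X0⟫ + (∫ t in (0:ℝ)..T, ⟪Astar (z t), B (d t)⟫)
        - (∫ t in (0:ℝ)..T, ⟪z t, A (B (d t))⟫)
        - ∫ t in (0:ℝ)..T, ⟪z t, U t⟫

/-- `S` is a strongly continuous semigroup on `H` whose generator is the restriction of `A`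
to `domA0`. -/
def IsC0SemigroupGeneratedBy {H : Type*} [NormedAddCommGroup H] [NormedSpace ℂ H]
    (S : ℝ → H →L[ℂ] H) (domA0 : Set H) (A : H → H) : Prop :=
  S 0 = ContinuousLinearMap.id ℂ H ∧
  (∀ t ∈ Set.Ici (0:ℝ), ∀ s ∈ Set.Ici (0:ℝ), S (t + s) = (S t).comp (S s)) ∧
  (∀ x : H, ContinuousOn (fun t => S t x) (Set.Ici 0)) ∧
  (∀ x : H, x ∈ domA0 ↔ ∃ y : H,
      Filter.Tendsto (fun h : ℝ => h⁻¹ • (S h x - x)) (nhdsWithin 0 (Set.Ioi 0)) (nhds y)) ∧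
  ∀ x ∈ domA0, Filter.Tendsto (fun h : ℝ => h⁻¹ • (S h x - x)) (nhdsWithin 0 (Set.Ioi 0)) (nhds (A x))

lemma sub_mem_domA {H : Type*} [NormedAddCommGroup H] [NormedSpace ℂ H] {domA : Set H}
    (hdomA : ∀ x ∈ domA, ∀ y ∈ domA, ∀ a b : ℂ, a • x + b • y ∈ domA)
    {x y : H} (hx : x ∈ domA) (hy : y ∈ domA) : x - y ∈ domA := by
  have := hdomA x hx y hy 1 (-1)
  simpa [sub_eq_add_neg] using this

lemma IsLinearOn.map_sub {H K : Type*} [AddCommGroup H] [Module ℂ H] [AddCommGroup K]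
    [Module ℂ K] {f : H → K} {domA : Set H}
    (hdomA : ∀ x ∈ domA, ∀ y ∈ domA, ∀ a b : ℂ, a • x + b • y ∈ domA)
    (hf : IsLinearOn f domA) {x y : H} (hx : x ∈ domA) (hy : y ∈ domA) :
    f (x - y) = f x - f y := by
  have hy' : (-1 : ℂ) • y ∈ domA := by
    have := hdomA y hy y hy (-1) 0; simpa using this
  have h1 : f (x + (-1 : ℂ) • y) = f x + f ((-1 : ℂ) • y) := hf.1 x hx _ hy'
  have h2 : f ((-1 : ℂ) • y) = (-1 : ℂ) • f y := hf.2 (-1) y hy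
  simp only [neg_smul, one_smul] at h1 h2
  rw [sub_eq_add_neg, h1, h2, ← sub_eq_add_neg]

lemma classical_imp_weak
    {H : Type*} [NormedAddCommGroup H] [InnerProductSpace ℂ H] [CompleteSpace H]
    {m : ℕ}
    (domA : Set H) (A : H → H) (Bop : H → EuclideanSpace ℂ (Fin m))
    (hdomA : ∀ x ∈ domA, ∀ y ∈ domA, ∀ a b : ℂ, a • x + b • y ∈ domA)
    (hAlin : IsLinearOn A domA) (hBoplin : IsLinearOn Bop domA)
    (domAstar : Set H) (Astar : H → H)
    (hadj : ∀ z ∈ domAstar, ∀ x ∈ domA, Bop x = 0 → ⟪Astar z, x⟫ = ⟪z, A x⟫)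
    (B : EuclideanSpace ℂ (Fin m) →L[ℂ] H)
    (hBdom : ∀ v, B v ∈ domA) (hBlift : ∀ v, Bop (B v) = v)
    (hABcont : Continuous fun v => A (B v))
    (X0 : H) (d : ℝ → EuclideanSpace ℂ (Fin m)) (U : ℝ → H)
    (hd : ContinuousOn d (Set.Ici 0)) (hU : ContinuousOn U (Set.Ici 0))
    (X : ℝ → H) (hX : IsClassicalSolution A Bop domA X0 d U X) :
    IsWeakSolution A domAstar Astar B X0 d U X := by
  obtain ⟨hXc, hXdom, hAXc, hXder, hX0, hXB⟩ := hX
  refine ⟨hXc, ?_⟩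
  intro T hT z z' hzdom hzder hz'c hAzc hzT
  have hsub : Set.Icc (0:ℝ) T ⊆ Set.Ici 0 := fun t ht => ht.1
  have huIcc : Set.uIcc (0:ℝ) T = Set.Icc 0 T := Set.uIcc_of_le hT.le
  have hzc : ContinuousOn z (Set.Icc 0 T) := fun t ht => (hzder t ht).continuousWithinAt
  have hXc' : ContinuousOn X (Set.Icc 0 T) := hXc.mono hsub
  have hAXc' : ContinuousOn (fun t => A (X t)) (Set.Icc 0 T) := hAXc.mono hsub
  have hU' : ContinuousOn U (Set.Icc 0 T) := hU.mono hsub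
  have hd' : ContinuousOn d (Set.Icc 0 T) := hd.mono hsub
  have hBd : ContinuousOn (fun t => B (d t)) (Set.Icc 0 T) := B.continuous.comp_continuousOn hd'
  have hABd : ContinuousOn (fun t => A (B (d t))) (Set.Icc 0 T) := hABcont.comp_continuousOn hd'
  -- pointwise adjoint identity
  have hkey : ∀ t ∈ Set.Icc (0:ℝ) T,
      ⟪Astar (z t), X t⟫ = ⟪Astar (z t), B (d t)⟫ + ⟪z t, A (X t)⟫ - ⟪z t, A (B (d t))⟫ := by
    intro t ht
    have hx : X t ∈ domA := hXdom t (hsub ht)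
    have hy : X t - B (d t) ∈ domA := sub_mem_domA hdomA hx (hBdom (d t))
    have hBy : Bop (X t - B (d t)) = 0 := by
      rw [hBoplin.map_sub hdomA hx (hBdom (d t)), hXB t (hsub ht), hBlift, sub_self]
    have hAy : A (X t - B (d t)) = A (X t) - A (B (d t)) :=
      hAlin.map_sub hdomA hx (hBdom (d t))
    have := hadj (z t) (hzdom t ht) _ hy hBy
    rw [hAy, inner_sub_right, inner_sub_right] at this
    linear_combination this
  -- FTC for ⟪z t, X t⟫
  set g' : ℝ → ℂ := fun t => ⟪z t, A (X t) + U t⟫ + ⟪z' t, X t⟫ with hg'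
  have hGder : ∀ t ∈ Set.Icc (0:ℝ) T, HasDerivWithinAt (fun t => ⟪z t, X t⟫) (g' t)
      (Set.Icc 0 T) t := by
    intro t ht
    exact HasDerivWithinAt.inner ℂ (hzder t ht) ((hXder t (hsub ht)).mono hsub)
  have hg'c : ContinuousOn g' (Set.Icc 0 T) := by
    apply ContinuousOn.add
    · exact ContinuousOn.inner hzc (hAXc'.add hU')
    · exact ContinuousOn.inner hz'c hXc'
  have hint_g' : IntervalIntegrable g' MeasureTheory.volume 0 T := by
    apply ContinuousOn.intervalIntegrable; rwa [huIcc]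
  have hftc : (∫ t in (0:ℝ)..T, g' t) = -⟪z 0, X0⟫ := by
    have := intervalIntegral.integral_eq_sub_of_hasDeriv_right_of_le hT.le
      (ContinuousOn.inner hzc hXc')
      (fun x hx => (hGder x (Set.Ioo_subset_Icc_self hx)).mono_of_mem_nhdsWithin
        (Icc_mem_nhdsGT_of_mem ⟨hx.1.le, hx.2⟩))
      hint_g'
    rw [this, hzT, hX0]
    simp
  -- rewrite the integrand
  have hcongr : (∫ t in (0:ℝ)..T, ⟪Astar (z t) + z' t, X t⟫) =
      ∫ t in (0:ℝ)..T,
        (⟪Astar (z t), B (d t)⟫ - ⟪z t, A (B (d t))⟫ + g' t - ⟪z t, U t⟫) := by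
    apply intervalIntegral.integral_congr
    intro t ht
    rw [huIcc] at ht
    have h1 := hkey t ht
    simp only [hg', inner_add_left, inner_add_right]
    linear_combination h1
  rw [hcongr]
  have i1 : IntervalIntegrable (fun t => ⟪Astar (z t), B (d t)⟫) MeasureTheory.volume 0 T := by
    apply ContinuousOn.intervalIntegrable; rw [huIcc]; exact ContinuousOn.inner hAzc hBd
  have i2 : IntervalIntegrable (fun t => ⟪z t, A (B (d t))⟫) MeasureTheory.volume 0 T := by
    apply ContinuousOn.intervalIntegrable; rw [huIcc]; exact ContinuousOn.inner hzc hABd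
  have i4 : IntervalIntegrable (fun t => ⟪z t, U t⟫) MeasureTheory.volume 0 T := by
    apply ContinuousOn.intervalIntegrable; rw [huIcc]; exact ContinuousOn.inner hzc hU'
  rw [intervalIntegral.integral_sub (((i1.sub i2).add hint_g')) i4,
    intervalIntegral.integral_add (i1.sub i2) hint_g',
    intervalIntegral.integral_sub i1 i2, hftc]
  ring


open Filter Set intervalIntegral MeasureTheory
open scoped Topology

lemma tendsto_shift (s : ℝ) : Tendsto (fun x : ℝ => x - s) (𝓝[>] s) (𝓝[>] 0) := by
  apply tendsto_nhdsWithin_of_tendsto_nhds_of_eventually_within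
  · have : Tendsto (fun x : ℝ => x - s) (𝓝 s) (𝓝 (s - s)) :=
      (continuous_id.sub continuous_const).tendsto s
    simpa using this.mono_left nhdsWithin_le_nhds
  · filter_upwards [eventually_mem_nhdsWithin] with x hx
    simpa [Set.mem_Ioi] using sub_pos.mpr (Set.mem_Ioi.mp hx)

lemma eq_of_inner_right_dense {H : Type*} [NormedAddCommGroup H] [InnerProductSpace ℂ H]
    {s : Set H} (hdense : Dense s) {a b : H} (h : ∀ x ∈ s, ⟪a, x⟫ = ⟪b, x⟫) : a = b := by
  have hfun : (fun x : H => ⟪a, x⟫) = fun x : H => ⟪b, x⟫ := by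
    apply Continuous.ext_on hdense
    · exact continuous_const.inner continuous_id
    · exact continuous_const.inner continuous_id
    · exact h
  exact ext_inner_right ℂ (fun v => by
    have := congrFun hfun v
    exact this)

/-- right derivative of semigroup orbit -/
lemma orbit_hasDerivWithinAt {H : Type*} [NormedAddCommGroup H] [NormedSpace ℂ H]
    (Sm : ℝ → H →L[ℂ] H)
    (hcomp : ∀ t ≥ (0:ℝ), ∀ h ≥ (0:ℝ), Sm (t + h) = (Sm t).comp (Sm h))
    (u y : H) (hgen : Tendsto (fun h : ℝ => h⁻¹ • (Sm h u - u)) (𝓝[>] 0) (𝓝 y))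
    (s : ℝ) (hs : 0 ≤ s) :
    HasDerivWithinAt (fun σ => Sm σ u) (Sm s y) (Set.Ioi s) s := by
  rw [hasDerivWithinAt_iff_tendsto_slope]
  have hset : Set.Ioi s \ {s} = Set.Ioi s := by simp
  rw [hset]
  have h1 : Tendsto (fun x : ℝ => Sm s ((x - s)⁻¹ • (Sm (x - s) u - u))) (𝓝[>] s)
      (𝓝 (Sm s y)) :=
    ((Sm s).continuous.tendsto y).comp (hgen.comp (tendsto_shift s))
  apply h1.congr'
  filter_upwards [eventually_mem_nhdsWithin] with x hx
  have hxs : (0:ℝ) < x - s := sub_pos.mpr hx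
  have hSx : Sm x u = Sm s (Sm (x - s) u) := by
    have := hcomp s hs (x - s) hxs.le
    have hx' : s + (x - s) = x := by ring
    rw [hx'] at this
    rw [this]; rfl
  rw [slope_def_module, hSx, ← (Sm s).map_sub, ← (Sm s).map_smul_of_tower]

lemma stage1 {H : Type*} [NormedAddCommGroup H] [InnerProductSpace ℂ H] [CompleteSpace H]
    (domAstar : Set H) (Astar : H → H)
    (hsm : ∀ c : ℂ, ∀ ζ ∈ domAstar, c • ζ ∈ domAstar)
    (hAsm : ∀ c : ℂ, ∀ ζ ∈ domAstar, Astar (c • ζ) = c • Astar ζ)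
    (W : ℝ → H) (hWc : Continuous W)
    (hdiff : ∀ T > (0:ℝ), ∀ z z' : ℝ → H,
      (∀ t ∈ Set.Icc (0:ℝ) T, z t ∈ domAstar) →
      (∀ t ∈ Set.Icc (0:ℝ) T, HasDerivWithinAt z (z' t) (Set.Icc 0 T) t) →
      ContinuousOn z' (Set.Icc 0 T) →
      ContinuousOn (fun t => Astar (z t)) (Set.Icc 0 T) →
      z T = 0 →
      (∫ t in (0:ℝ)..T, ⟪Astar (z t) + z' t, W t⟫) = 0) :
    ∀ ζ ∈ domAstar, ∀ T : ℝ, 0 ≤ T →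
      ⟪ζ, W T⟫ = ∫ t in (0:ℝ)..T, ⟪Astar ζ, W t⟫ := by
  intro ζ hζ T₀ hT₀
  set f : ℝ → ℂ := fun t => ⟪Astar ζ, W t⟫ with hf
  set g : ℝ → ℂ := fun t => ⟪ζ, W t⟫ with hg
  have hfc : Continuous f := continuous_const.inner hWc
  have hgc : Continuous g := continuous_const.inner hWc
  have htf : Continuous (fun t : ℝ => (t:ℂ) * f t) :=
    Complex.continuous_ofReal.mul hfc
  -- the basic identity for each T > 0
  have hbasic : ∀ T > (0:ℝ),
      (∫ t in (0:ℝ)..T, (t:ℂ) * f t) - (T:ℂ) * (∫ t in (0:ℝ)..T, f t)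
        + (∫ t in (0:ℝ)..T, g t) = 0 := by
    intro T hT
    set z : ℝ → H := fun t => ((t:ℂ) - (T:ℂ)) • ζ with hz
    have hzder : ∀ t : ℝ, HasDerivAt z ζ t := by
      intro t
      have h1 : HasDerivAt (fun t : ℝ => ((t:ℂ) - (T:ℂ))) 1 t := by
        have := (Complex.ofRealCLM.hasDerivAt (x := t)).sub_const (T:ℂ)
        simpa using this
      have := h1.smul_const ζ
      simpa using this
    have hzmem : ∀ t : ℝ, z t ∈ domAstar := fun t => hsm _ ζ hζ
    have hAz : ∀ t : ℝ, Astar (z t) = ((t:ℂ) - (T:ℂ)) • Astar ζ :=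
      fun t => hAsm _ ζ hζ
    have hAzc : ContinuousOn (fun t => Astar (z t)) (Set.Icc 0 T) := by
      have hc : ContinuousOn (fun t : ℝ => ((t:ℂ) - (T:ℂ)) • Astar ζ) (Set.Icc 0 T) :=
        ((Complex.continuous_ofReal.sub continuous_const).smul continuous_const).continuousOn
      exact hc.congr (fun t _ => hAz t)
    have hid := hdiff T hT z (fun _ => ζ) (fun t _ => hzmem t)
      (fun t _ => (hzder t).hasDerivWithinAt) continuousOn_const hAzc
      (by simp [hz])
    have hrw : (fun t => ⟪Astar (z t) + ζ, W t⟫) =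
        fun t : ℝ => ((t:ℂ) * f t - (T:ℂ) * f t) + g t := by
      funext t
      rw [hAz t, inner_add_left, inner_smul_left]
      simp only [map_sub, Complex.conj_ofReal]
      ring
    rw [hrw] at hid
    have hif : IntervalIntegrable f volume 0 T := hfc.intervalIntegrable _ _
    have hitf : IntervalIntegrable (fun t : ℝ => (t:ℂ) * f t) volume 0 T :=
      htf.intervalIntegrable _ _
    have hiTf : IntervalIntegrable (fun t : ℝ => (T:ℂ) * f t) volume 0 T :=
      (continuous_const.mul hfc).intervalIntegrable _ _
    have hig : IntervalIntegrable g volume 0 T := hgc.intervalIntegrable _ _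
    rw [intervalIntegral.integral_add (hitf.sub hiTf) hig,
      intervalIntegral.integral_sub hitf hiTf,
      intervalIntegral.integral_const_mul] at hid
    linear_combination hid
  -- differentiate
  have hkey : ∀ T > (0:ℝ), g T = ∫ t in (0:ℝ)..T, f t := by
    intro T hT
    set Φ : ℝ → ℂ := fun T' => (∫ t in (0:ℝ)..T', (t:ℂ) * f t)
      - (T':ℂ) * (∫ t in (0:ℝ)..T', f t) + ∫ t in (0:ℝ)..T', g t with hΦ
    have hΦder : HasDerivAt Φ (g T - ∫ t in (0:ℝ)..T, f t) T := by
      have h1 : HasDerivAt (fun T' => ∫ t in (0:ℝ)..T', (t:ℂ) * f t) ((T:ℂ) * f T) T :=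
        intervalIntegral.integral_hasDerivAt_right (htf.intervalIntegrable _ _)
          (htf.stronglyMeasurableAtFilter _ _) htf.continuousAt
      have h2 : HasDerivAt (fun T' : ℝ => ((T':ℂ))) 1 T := by
        simpa using (hasDerivAt_id T).ofReal_comp
      have h3 : HasDerivAt (fun T' => ∫ t in (0:ℝ)..T', f t) (f T) T :=
        intervalIntegral.integral_hasDerivAt_right (hfc.intervalIntegrable _ _)
          (hfc.stronglyMeasurableAtFilter _ _) hfc.continuousAt
      have h4 : HasDerivAt (fun T' => ∫ t in (0:ℝ)..T', g t) (g T) T :=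
        intervalIntegral.integral_hasDerivAt_right (hgc.intervalIntegrable _ _)
          (hgc.stronglyMeasurableAtFilter _ _) hgc.continuousAt
      have h5 := (h1.sub (h2.mul h3)).add h4
      have : (T:ℂ) * f T - (1 * (∫ t in (0:ℝ)..T, f t) + (T:ℂ) * f T) + g T
          = g T - ∫ t in (0:ℝ)..T, f t := by ring
      rw [this] at h5
      exact h5
    have hΦ0 : HasDerivAt Φ 0 T := by
      have hev : Φ =ᶠ[𝓝 T] (fun _ => (0:ℂ)) := by
        filter_upwards [Ioi_mem_nhds hT] with x hx
        exact hbasic x hx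
      exact (hev.hasDerivAt_iff).mpr (hasDerivAt_const T 0)
    have := hΦder.unique hΦ0
    linear_combination this
  rcases hT₀.eq_or_lt with h0 | hpos
  · -- T₀ = 0
    subst h0
    have hFc : Continuous (fun T => ∫ t in (0:ℝ)..T, f t) := by
      have : ∀ T : ℝ, HasDerivAt (fun T' => ∫ t in (0:ℝ)..T', f t) (f T) T := fun T =>
        intervalIntegral.integral_hasDerivAt_right (hfc.intervalIntegrable _ _)
          (hfc.stronglyMeasurableAtFilter _ _) hfc.continuousAt
      rw [continuous_iff_continuousAt]
      exact fun x => (this x).differentiableAt.continuousAt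
    have ht1 : Filter.Tendsto g (𝓝[>] (0:ℝ)) (𝓝 (g 0)) :=
      (hgc.tendsto 0).mono_left nhdsWithin_le_nhds
    have ht2 : Filter.Tendsto g (𝓝[>] (0:ℝ)) (𝓝 (∫ t in (0:ℝ)..(0:ℝ), f t)) := by
      have h2 : Filter.Tendsto (fun T => ∫ t in (0:ℝ)..T, f t) (𝓝[>] (0:ℝ))
          (𝓝 (∫ t in (0:ℝ)..(0:ℝ), f t)) :=
        (hFc.tendsto 0).mono_left nhdsWithin_le_nhds
      apply h2.congr'
      filter_upwards [eventually_mem_nhdsWithin] with x hx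
      exact (hkey x hx).symm
    have := tendsto_nhds_unique ht1 ht2
    simpa using this
  · exact hkey T₀ hpos

lemma weak_zero
    {H : Type*} [NormedAddCommGroup H] [InnerProductSpace ℂ H] [CompleteSpace H]
    (domA : Set H) {m : ℕ} (Bop : H → EuclideanSpace ℂ (Fin m)) (A : H → H)
    (domAstar : Set H) (Astar : H → H)
    (hdense : Dense {x : H | x ∈ domA ∧ Bop x = 0})
    (hadjdom : ∀ z : H, z ∈ domAstar ↔ ∃ w : H, ∀ x ∈ domA, Bop x = 0 → ⟪w, x⟫ = ⟪z, A x⟫)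
    (hadj : ∀ z ∈ domAstar, ∀ x ∈ domA, Bop x = 0 → ⟪Astar z, x⟫ = ⟪z, A x⟫)
    (Sm : ℝ → H →L[ℂ] H)
    (hid : Sm 0 = ContinuousLinearMap.id ℂ H)
    (hcomp : ∀ t ≥ (0:ℝ), ∀ h ≥ (0:ℝ), Sm (t + h) = (Sm t).comp (Sm h))
    (hc : ∀ x : H, Continuous fun s => Sm s x)
    (hmem : ∀ x : H, (x ∈ domA ∧ Bop x = 0) ↔ ∃ y : H,
        Tendsto (fun h : ℝ => h⁻¹ • (Sm h x - x)) (𝓝[>] 0) (𝓝 y))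
    (hgen : ∀ x : H, x ∈ domA → Bop x = 0 →
        Tendsto (fun h : ℝ => h⁻¹ • (Sm h x - x)) (𝓝[>] 0) (𝓝 (A x)))
    (W : ℝ → H) (hWc : Continuous W)
    (hW : ∀ ζ ∈ domAstar, ∀ T : ℝ, 0 ≤ T → ⟪ζ, W T⟫ = ∫ t in (0:ℝ)..T, ⟪Astar ζ, W t⟫) :
    ∀ t : ℝ, 0 ≤ t → W t = 0 := by
  classical
  -- local uniform bound on the semigroup
  have hbound : ∀ b : ℝ, ∃ M : ℝ, 0 ≤ M ∧ ∀ σ ∈ Set.Icc (0:ℝ) b, ‖Sm σ‖ ≤ M := by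
    intro b
    have hptw : ∀ x : H, ∃ C : ℝ, ∀ i : (Set.Icc (0:ℝ) b), ‖Sm i.1 x‖ ≤ C := by
      intro x
      obtain ⟨C, hC⟩ := isCompact_Icc.exists_bound_of_continuousOn (hc x).continuousOn
      exact ⟨C, fun i => hC i.1 i.2⟩
    obtain ⟨C', hC'⟩ := banach_steinhaus (g := fun i : (Set.Icc (0:ℝ) b) => Sm i.1) hptw
    refine ⟨max C' 0, le_max_right _ _, fun σ hσ => ?_⟩
    exact le_trans (hC' ⟨σ, hσ⟩) (le_max_left _ _)
  set V : ℝ → H := fun T => ∫ t in (0:ℝ)..T, W t with hV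
  have hVder : ∀ T : ℝ, HasDerivAt V (W T) T := fun T =>
    intervalIntegral.integral_hasDerivAt_right (hWc.intervalIntegrable _ _)
      (hWc.stronglyMeasurableAtFilter _ _) hWc.continuousAt
  have hVc : Continuous V := by
    rw [continuous_iff_continuousAt]
    exact fun x => (hVder x).differentiableAt.continuousAt
  have hV0 : V 0 = 0 := intervalIntegral.integral_same
  -- Step A : V T belongs to the generator's domain with A (V T) = W T
  have stepA : ∀ T : ℝ, 0 ≤ T → (V T ∈ domA ∧ Bop (V T) = 0) ∧ A (V T) = W T := by
    intro T hT
    have hJ : ∀ r, 0 < r → (∫ s in (0:ℝ)..r, Sm s (W T)) = Sm r (V T) - V T := by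
      intro r hr
      obtain ⟨M, hM0, hM⟩ := hbound r
      apply ext_inner_left ℂ
      intro x
      -- the functional u ↦ ∫₀ʳ ⟪x, Sm s u⟫
      have hcont : ∀ u : H, Continuous fun s : ℝ => ⟪x, Sm s u⟫ :=
        fun u => continuous_const.inner (hc u)
      set φlin : H →ₗ[ℂ] ℂ :=
        { toFun := fun u => ∫ s in (0:ℝ)..r, ⟪x, Sm s u⟫
          map_add' := by
            intro u v
            rw [← intervalIntegral.integral_add ((hcont u).intervalIntegrable _ _)
              ((hcont v).intervalIntegrable _ _)]
            apply intervalIntegral.integral_congr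
            intro s _
            simp [inner_add_right]
          map_smul' := by
            intro c u
            simp only [RingHom.id_apply]
            rw [smul_eq_mul, ← intervalIntegral.integral_const_mul]
            apply intervalIntegral.integral_congr
            intro s _
            simp [inner_smul_right] } with hφlin
      have hφbound : ∀ u : H, ‖φlin u‖ ≤ (M * ‖x‖ * r) * ‖u‖ := by
        intro u
        have h1 : ∀ s ∈ Set.uIoc (0:ℝ) r, ‖⟪x, Sm s u⟫‖ ≤ ‖x‖ * (M * ‖u‖) := by
          intro s hs
          rw [Set.uIoc_of_le hr.le] at hs
          calc ‖⟪x, Sm s u⟫‖ ≤ ‖x‖ * ‖Sm s u‖ := norm_inner_le_norm _ _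
            _ ≤ ‖x‖ * (M * ‖u‖) := by
                apply mul_le_mul_of_nonneg_left _ (norm_nonneg x)
                calc ‖Sm s u‖ ≤ ‖Sm s‖ * ‖u‖ := (Sm s).le_opNorm u
                  _ ≤ M * ‖u‖ := by
                      apply mul_le_mul_of_nonneg_right _ (norm_nonneg u)
                      exact hM s ⟨hs.1.le, hs.2⟩
        have h2 := intervalIntegral.norm_integral_le_of_norm_le_const h1
        have h3 : |r - 0| = r := by rw [sub_zero, abs_of_pos hr]
        rw [h3] at h2
        calc ‖φlin u‖ ≤ ‖x‖ * (M * ‖u‖) * r := h2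
          _ = (M * ‖x‖ * r) * ‖u‖ := by ring
      set φ : H →L[ℂ] ℂ := φlin.mkContinuous _ hφbound with hφ
      set ζ : H := (InnerProductSpace.toDual ℂ H).symm φ with hζdef
      have hζ : ∀ u : H, ⟪ζ, u⟫ = ∫ s in (0:ℝ)..r, ⟪x, Sm s u⟫ := fun u =>
        InnerProductSpace.toDual_symm_apply
      set w : H := (ContinuousLinearMap.adjoint (Sm r)) x - x with hw
      have hwu : ∀ u ∈ domA, Bop u = 0 → ⟪w, u⟫ = ⟪ζ, A u⟫ := by
        intro u hu hBu
        have horb : ∀ s ∈ Set.Ioo (0:ℝ) r,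
            HasDerivWithinAt (fun σ => ⟪x, Sm σ u⟫) ⟪x, Sm s (A u)⟫ (Set.Ioi s) s := by
          intro s hs
          have h1 := orbit_hasDerivWithinAt Sm hcomp u (A u) (hgen u hu hBu) s hs.1.le
          have h2 := HasDerivWithinAt.inner ℂ
            (hasDerivWithinAt_const s (Set.Ioi s) x) h1
          simpa using h2
        have hftc := intervalIntegral.integral_eq_sub_of_hasDeriv_right_of_le hr.le
          ((hcont u).continuousOn) horb ((hcont (A u)).intervalIntegrable _ _)
        have hSm0 : Sm 0 u = u := by rw [hid]; rfl
        rw [hSm0] at hftc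
        rw [hζ (A u), hftc, hw, inner_sub_left, ContinuousLinearMap.adjoint_inner_left]
      have hζdom : ζ ∈ domAstar := (hadjdom ζ).mpr ⟨w, hwu⟩
      have hAζ : Astar ζ = w := by
        apply eq_of_inner_right_dense hdense
        intro u hu
        rw [hadj ζ hζdom u hu.1 hu.2, hwu u hu.1 hu.2]
      have hmain := hW ζ hζdom T hT
      have hLHS : ⟪ζ, W T⟫ = ⟪x, ∫ s in (0:ℝ)..r, Sm s (W T)⟫ := by
        rw [hζ (W T)]
        exact (innerSL ℂ x).intervalIntegral_comp_comm ((hc (W T)).intervalIntegrable _ _)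
      have hRHS : (∫ t in (0:ℝ)..T, ⟪Astar ζ, W t⟫) = ⟪x, Sm r (V T) - V T⟫ := by
        have : (∫ t in (0:ℝ)..T, ⟪Astar ζ, W t⟫) = ⟪Astar ζ, V T⟫ :=
          (innerSL ℂ (Astar ζ)).intervalIntegral_comp_comm (hWc.intervalIntegrable _ _)
        rw [this, hAζ, hw, inner_sub_left, ContinuousLinearMap.adjoint_inner_left,
          inner_sub_right]
      rw [hLHS, hRHS] at hmain
      exact hmain
    -- the limit as r → 0⁺
    have hΨ := intervalIntegral.integral_hasDerivAt_right
      ((hc (W T)).intervalIntegrable (0:ℝ) (0:ℝ))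
      ((hc (W T)).stronglyMeasurableAtFilter _ _) (hc (W T)).continuousAt
    rw [hasDerivAt_iff_tendsto_slope] at hΨ
    have hmono : 𝓝[>] (0:ℝ) ≤ 𝓝[≠] (0:ℝ) :=
      nhdsWithin_mono 0 (fun x hx => ne_of_gt hx)
    have hΨ' := hΨ.mono_left hmono
    have hSm0W : Sm 0 (W T) = W T := by rw [hid]; rfl
    rw [hSm0W] at hΨ'
    have htend : Tendsto (fun r : ℝ => r⁻¹ • (Sm r (V T) - V T)) (𝓝[>] 0) (𝓝 (W T)) := by
      apply hΨ'.congr'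
      filter_upwards [eventually_mem_nhdsWithin] with r hr
      rw [slope_def_module, intervalIntegral.integral_same, sub_zero, sub_zero,
        hJ r hr]
    have hmemD : V T ∈ domA ∧ Bop (V T) = 0 := (hmem (V T)).mpr ⟨W T, htend⟩
    exact ⟨hmemD, tendsto_nhds_unique (hgen (V T) hmemD.1 hmemD.2) htend⟩
  -- Step B : V T = 0 for T > 0
  have stepB : ∀ T : ℝ, 0 < T → V T = 0 := by
    intro T hT
    obtain ⟨M, hM0, hM⟩ := hbound T
    set ρ : ℝ → H := fun s => Sm (T - s) (V s) with hρ
    have hρc : ContinuousOn ρ (Set.Icc 0 T) := by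
      intro s₀ hs₀
      have h1 : Tendsto (fun s => Sm (T - s) (V s₀)) (𝓝[Set.Icc 0 T] s₀)
          (𝓝 (Sm (T - s₀) (V s₀))) := by
        have hcomp1 : Continuous fun s : ℝ => Sm (T - s) (V s₀) :=
          (hc (V s₀)).comp (continuous_const.sub continuous_id)
        exact (hcomp1.tendsto s₀).mono_left nhdsWithin_le_nhds
      have h2 : Tendsto (fun s => Sm (T - s) (V s) - Sm (T - s) (V s₀))
          (𝓝[Set.Icc 0 T] s₀) (𝓝 0) := by
        apply squeeze_zero_norm' (a := fun s => M * ‖V s - V s₀‖)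
        · filter_upwards [eventually_mem_nhdsWithin] with s hs
          rw [← (Sm (T - s)).map_sub]
          calc ‖Sm (T - s) (V s - V s₀)‖ ≤ ‖Sm (T - s)‖ * ‖V s - V s₀‖ :=
                (Sm (T - s)).le_opNorm _
            _ ≤ M * ‖V s - V s₀‖ := by
                apply mul_le_mul_of_nonneg_right _ (norm_nonneg _)
                exact hM (T - s) ⟨by linarith [hs.2], by linarith [hs.1]⟩
        · have : Continuous fun s => M * ‖V s - V s₀‖ :=
            continuous_const.mul ((hVc.sub continuous_const).norm)
          have := (this.tendsto s₀).mono_left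
            (nhdsWithin_le_nhds (s := Set.Icc (0:ℝ) T))
          simpa using this
      have h3 := h1.add h2
      rw [add_zero] at h3
      apply h3.congr
      intro s
      simp [hρ]
    have hρder : ∀ s ∈ Set.Ico (0:ℝ) T, HasDerivWithinAt ρ 0 (Set.Ici s) s := by
      intro s hs
      rw [hasDerivWithinAt_iff_tendsto_slope, Set.Ici_sdiff_left]
      have hVs := stepA s hs.1
      -- the quotient tends to zero
      have hq : Tendsto (fun x => (x - s)⁻¹ • (V x - Sm (x - s) (V s))) (𝓝[>] s)
          (𝓝 0) := by
        have hq1 : Tendsto (fun x => (x - s)⁻¹ • (V x - V s)) (𝓝[>] s) (𝓝 (W s)) := by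
          have := (hasDerivAt_iff_tendsto_slope.mp (hVder s)).mono_left
            (nhdsWithin_mono s (fun x hx => ne_of_gt hx))
          apply this.congr'
          filter_upwards [eventually_mem_nhdsWithin] with x _
          rw [slope_def_module]
        have hq2 : Tendsto (fun x => (x - s)⁻¹ • (Sm (x - s) (V s) - V s)) (𝓝[>] s)
            (𝓝 (W s)) := by
          have := (hgen (V s) hVs.1.1 hVs.1.2).comp (tendsto_shift s)
          rw [hVs.2] at this
          exact this
        have := hq1.sub hq2
        rw [sub_self] at this
        apply this.congr
        intro x
        rw [← smul_sub]
        congr 1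
        abel
      apply squeeze_zero_norm' (a := fun x => M * ‖(x - s)⁻¹ • (V x - Sm (x - s) (V s))‖)
      · filter_upwards [Ioc_mem_nhdsGT_of_mem (Set.mem_Ico.mpr ⟨le_rfl, hs.2⟩)] with x hx
        have hxs : 0 < x - s := sub_pos.mpr hx.1
        have hrw : ρ x - ρ s = Sm (T - x) (V x - Sm (x - s) (V s)) := by
          have hTx : (0:ℝ) ≤ T - x := by linarith [hx.2]
          have hsplit := hcomp (T - x) hTx (x - s) hxs.le
          have heq : T - x + (x - s) = T - s := by ring
          rw [heq] at hsplit
          rw [hρ]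
          simp only
          rw [hsplit, (Sm (T - x)).map_sub]
          rfl
        rw [slope_def_module, hrw, ← (Sm (T - x)).map_smul_of_tower]
        calc ‖Sm (T - x) ((x - s)⁻¹ • (V x - Sm (x - s) (V s)))‖
            ≤ ‖Sm (T - x)‖ * ‖(x - s)⁻¹ • (V x - Sm (x - s) (V s))‖ :=
              (Sm (T - x)).le_opNorm _
          _ ≤ M * ‖(x - s)⁻¹ • (V x - Sm (x - s) (V s))‖ := by
              apply mul_le_mul_of_nonneg_right _ (norm_nonneg _)
              exact hM (T - x) ⟨by linarith [hx.2], by linarith [hxs, hs.1]⟩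
      · have := (hq.norm.const_mul M)
        simpa using this
    have hconst := constant_of_has_deriv_right_zero hρc hρder T
      (Set.mem_Icc.mpr ⟨hT.le, le_rfl⟩)
    have hρT : ρ T = V T := by
      rw [hρ]; simp only [sub_self, hid]; rfl
    have hρ0 : ρ 0 = 0 := by
      rw [hρ]; simp only [sub_zero, hV0, map_zero]
    rw [hρT, hρ0] at hconst
    exact hconst
  -- Step C : W = 0 on [0, ∞)
  intro t ht
  have hVzero : ∀ x : ℝ, 0 ≤ x → V x = 0 := by
    intro x hx
    rcases hx.eq_or_lt with h | h
    · rw [← h]; exact hV0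
    · exact stepB x h
  have h1 : HasDerivWithinAt V (W t) (Set.Ici 0) t := (hVder t).hasDerivWithinAt
  have h2 : HasDerivWithinAt (fun _ : ℝ => (0:H)) (W t) (Set.Ici 0) t :=
    h1.congr (fun y hy => (hVzero y hy).symm) ((hVzero t ht).symm)
  have h3 : HasDerivWithinAt (fun _ : ℝ => (0:H)) (0:H) (Set.Ici 0) t :=
    hasDerivWithinAt_const t _ 0
  have hud : UniqueDiffWithinAt ℝ (Set.Ici (0:ℝ)) t := uniqueDiffOn_Ici 0 t ht
  rw [← h2.derivWithin hud, h3.derivWithin hud]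

lemma domAstar_smul {H : Type*} [NormedAddCommGroup H] [InnerProductSpace ℂ H]
    {m : ℕ} {domA : Set H} {Bop : H → EuclideanSpace ℂ (Fin m)} {A : H → H}
    {domAstar : Set H}
    (hadjdom : ∀ z : H, z ∈ domAstar ↔ ∃ w : H, ∀ x ∈ domA, Bop x = 0 → ⟪w, x⟫ = ⟪z, A x⟫)
    (c : ℂ) (ζ : H) (hζ : ζ ∈ domAstar) : c • ζ ∈ domAstar := by
  obtain ⟨w, hw⟩ := (hadjdom ζ).mp hζ
  refine (hadjdom _).mpr ⟨c • w, fun x hx hBx => ?_⟩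
  rw [inner_smul_left, inner_smul_left, hw x hx hBx]

lemma Astar_smul {H : Type*} [NormedAddCommGroup H] [InnerProductSpace ℂ H]
    {m : ℕ} {domA : Set H} {Bop : H → EuclideanSpace ℂ (Fin m)} {A : H → H}
    {domAstar : Set H} {Astar : H → H}
    (hdense : Dense {x : H | x ∈ domA ∧ Bop x = 0})
    (hadjdom : ∀ z : H, z ∈ domAstar ↔ ∃ w : H, ∀ x ∈ domA, Bop x = 0 → ⟪w, x⟫ = ⟪z, A x⟫)
    (hadj : ∀ z ∈ domAstar, ∀ x ∈ domA, Bop x = 0 → ⟪Astar z, x⟫ = ⟪z, A x⟫)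
    (c : ℂ) (ζ : H) (hζ : ζ ∈ domAstar) : Astar (c • ζ) = c • Astar ζ := by
  apply eq_of_inner_right_dense hdense
  intro u hu
  rw [hadj _ (domAstar_smul hadjdom c ζ hζ) u hu.1 hu.2, inner_smul_left, inner_smul_left,
    hadj ζ hζ u hu.1 hu.2]


/-- For regular data the concepts of classical and weak solutions coincide
(Corollary 1 of the paper). -/
theorem statement_10 {H : Type*} [NormedAddCommGroup H] [InnerProductSpace ℂ H] [CompleteSpace H]
    [TopologicalSpace.SeparableSpace H]
    {m : ℕ} (hm : 0 < m)
    (domA : Set H) (A : H → H) (Bop : H → EuclideanSpace ℂ (Fin m))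
    (hdomA : ∀ x ∈ domA, ∀ y ∈ domA, ∀ a b : ℂ, a • x + b • y ∈ domA)
    (hAlin : IsLinearOn A domA) (hBoplin : IsLinearOn Bop domA)
    (domAstar : Set H) (Astar : H → H)
    (hdense : Dense {x : H | x ∈ domA ∧ Bop x = 0})
    (hadjdom : ∀ z : H, z ∈ domAstar ↔ ∃ w : H, ∀ x ∈ domA, Bop x = 0 → ⟪w, x⟫ = ⟪z, A x⟫)
    (hadj : ∀ z ∈ domAstar, ∀ x ∈ domA, Bop x = 0 → ⟪Astar z, x⟫ = ⟪z, A x⟫)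
    (B : EuclideanSpace ℂ (Fin m) →L[ℂ] H)
    (hBdom : ∀ v, B v ∈ domA) (hBlift : ∀ v, Bop (B v) = v)
    (hABcont : Continuous fun v => A (B v))
    (S : ℝ → H →L[ℂ] H)
    (hS : IsC0SemigroupGeneratedBy S {x : H | x ∈ domA ∧ Bop x = 0} A)
    (hinj : ∀ x ∈ domA, Bop x = 0 → A x = 0 → x = 0)
    (hexist : ∀ (X0 : H) (d : ℝ → EuclideanSpace ℂ (Fin m)) (U : ℝ → H),
      X0 ∈ domA → ContDiffOn ℝ 2 d (Set.Ici 0) → ContDiffOn ℝ 1 U (Set.Ici 0) → Bop X0 = d 0 →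
      ∃ X : ℝ → H, IsClassicalSolution A Bop domA X0 d U X) :
    ∀ (X0 : H) (d : ℝ → EuclideanSpace ℂ (Fin m)) (U : ℝ → H),
      X0 ∈ domA → ContDiffOn ℝ 2 d (Set.Ici 0) → ContDiffOn ℝ 1 U (Set.Ici 0) →
      Bop X0 = d 0 →
      ∀ X : ℝ → H,
        IsClassicalSolution A Bop domA X0 d U X ↔
          IsWeakSolution A domAstar Astar B X0 d U X := by
  intro X0 d U hX0 hd hU hBd0 X
  have hdc : ContinuousOn d (Set.Ici 0) := hd.continuousOn
  have hUc : ContinuousOn U (Set.Ici 0) := hU.continuousOn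
  constructor
  · exact classical_imp_weak domA A Bop hdomA hAlin hBoplin domAstar Astar hadj B hBdom
      hBlift hABcont X0 d U hdc hUc X
  · intro hweak
    obtain ⟨Y, hY⟩ := hexist X0 d U hX0 hd hU hBd0
    have hYweak := classical_imp_weak domA A Bop hdomA hAlin hBoplin domAstar Astar hadj B
      hBdom hBlift hABcont X0 d U hdc hUc Y hY
    obtain ⟨hSid, hScomp, hScont, hSmem, hSgen⟩ := hS
    -- max-regularized versions
    have hmax : Continuous fun t : ℝ => max t 0 := continuous_id.max continuous_const
    have hmax0 : ∀ t : ℝ, max t 0 ∈ Set.Ici (0:ℝ) := fun t => Set.mem_Ici.mpr (le_max_right t 0)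
    set W : ℝ → H := fun t => X (max t 0) - Y (max t 0) with hWdef
    have hWc : Continuous W :=
      (hweak.1.comp_continuous hmax hmax0).sub (hY.1.comp_continuous hmax hmax0)
    have hWt : ∀ t : ℝ, 0 ≤ t → W t = X t - Y t := by
      intro t ht
      rw [hWdef]
      simp only [max_eq_left ht]
    set Sm : ℝ → H →L[ℂ] H := fun s => S (max s 0) with hSm
    have hid' : Sm 0 = ContinuousLinearMap.id ℂ H := by rw [hSm]; simp [hSid]
    have hcomp' : ∀ t ≥ (0:ℝ), ∀ h ≥ (0:ℝ), Sm (t + h) = (Sm t).comp (Sm h) := by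
      intro t ht h hh
      rw [hSm]
      simp only [max_eq_left ht, max_eq_left hh, max_eq_left (add_nonneg ht hh)]
      exact hScomp t ht h hh
    have hc' : ∀ x : H, Continuous fun s => Sm s x :=
      fun x => (hScont x).comp_continuous hmax hmax0
    have hev : ∀ x : H, (fun h : ℝ => h⁻¹ • (S h x - x)) =ᶠ[nhdsWithin 0 (Set.Ioi 0)]
        (fun h : ℝ => h⁻¹ • (Sm h x - x)) := by
      intro x
      filter_upwards [eventually_mem_nhdsWithin] with h hh
      rw [hSm]
      simp only [max_eq_left (le_of_lt (Set.mem_Ioi.mp hh))]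
    have hmem' : ∀ x : H, (x ∈ domA ∧ Bop x = 0) ↔ ∃ y : H,
        Filter.Tendsto (fun h : ℝ => h⁻¹ • (Sm h x - x)) (nhdsWithin 0 (Set.Ioi 0)) (nhds y) := by
      intro x
      rw [show (x ∈ domA ∧ Bop x = 0) = (x ∈ {x : H | x ∈ domA ∧ Bop x = 0}) from rfl,
        hSmem x]
      exact exists_congr fun y => ⟨fun t => t.congr' (hev x), fun t => t.congr' (hev x).symm⟩
    have hgen' : ∀ x : H, x ∈ domA → Bop x = 0 →
        Filter.Tendsto (fun h : ℝ => h⁻¹ • (Sm h x - x)) (nhdsWithin 0 (Set.Ioi 0))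
          (nhds (A x)) := by
      intro x hx hBx
      exact (hSgen x ⟨hx, hBx⟩).congr' (hev x)
    -- the difference is a "zero-data" weak solution
    have hdiff : ∀ T > (0:ℝ), ∀ z z' : ℝ → H,
        (∀ t ∈ Set.Icc (0:ℝ) T, z t ∈ domAstar) →
        (∀ t ∈ Set.Icc (0:ℝ) T, HasDerivWithinAt z (z' t) (Set.Icc 0 T) t) →
        ContinuousOn z' (Set.Icc 0 T) →
        ContinuousOn (fun t => Astar (z t)) (Set.Icc 0 T) →
        z T = 0 →
        (∫ t in (0:ℝ)..T, ⟪Astar (z t) + z' t, W t⟫) = 0 := by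
      intro T hT z z' h1 h2 h3 h4 h5
      have e1 := hweak.2 T hT z z' h1 h2 h3 h4 h5
      have e2 := hYweak.2 T hT z z' h1 h2 h3 h4 h5
      have hsub : Set.Icc (0:ℝ) T ⊆ Set.Ici 0 := fun t ht => ht.1
      have huIcc : Set.uIcc (0:ℝ) T = Set.Icc 0 T := Set.uIcc_of_le hT.le
      have hqc : ContinuousOn (fun t => Astar (z t) + z' t) (Set.Icc 0 T) := h4.add h3
      have iX : IntervalIntegrable (fun t => ⟪Astar (z t) + z' t, X t⟫)
          MeasureTheory.volume 0 T := by
        apply ContinuousOn.intervalIntegrable; rw [huIcc]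
        exact ContinuousOn.inner hqc (hweak.1.mono hsub)
      have iY : IntervalIntegrable (fun t => ⟪Astar (z t) + z' t, Y t⟫)
          MeasureTheory.volume 0 T := by
        apply ContinuousOn.intervalIntegrable; rw [huIcc]
        exact ContinuousOn.inner hqc (hY.1.mono hsub)
      have hsplit : (∫ t in (0:ℝ)..T, ⟪Astar (z t) + z' t, W t⟫) =
          (∫ t in (0:ℝ)..T, ⟪Astar (z t) + z' t, X t⟫) -
          ∫ t in (0:ℝ)..T, ⟪Astar (z t) + z' t, Y t⟫ := by
        rw [← intervalIntegral.integral_sub iX iY]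
        apply intervalIntegral.integral_congr
        intro t ht
        rw [huIcc] at ht
        simp only [hWdef]
        rw [max_eq_left ht.1, inner_sub_right]
      rw [hsplit, e1, e2]
      ring
    have hW := stage1 domAstar Astar (domAstar_smul hadjdom)
      (Astar_smul hdense hadjdom hadj) W hWc hdiff
    have hzero := weak_zero domA Bop A domAstar Astar hdense hadjdom hadj Sm hid' hcomp'
      hc' hmem' hgen' W hWc hW
    have hXY : ∀ t : ℝ, 0 ≤ t → X t = Y t := by
      intro t ht
      have := hzero t ht
      rw [hWt t ht] at this
      exact sub_eq_zero.mp this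
    obtain ⟨hYc, hYdom, hAYc, hYder, hY0, hYB⟩ := hY
    refine ⟨hweak.1, ?_, ?_, ?_, ?_, ?_⟩
    · intro t ht; rw [hXY t ht]; exact hYdom t ht
    · exact hAYc.congr (fun t ht => by rw [hXY t ht])
    · intro t ht
      have := (hYder t ht).congr (fun y hy => hXY y hy) (hXY t ht)
      rwa [← hXY t ht] at this
    · rw [hXY 0 le_rfl]; exact hY0
    · intro t ht; rw [hXY t ht]; exact hYB t ht
end
end

section
/- Let X be a classical solution associated with (X₀, d, U). Then for every T > 0 and every continuously differentiable z : [0,T] → H taking values in D(𝒜₀*) with t ↦ 𝒜₀* z(t) continuous, the following identity holds: ∫₀ᵀ ⟨X(t), 𝒜₀* z(t) + z′(t)⟩ dt = ⟨X(T), z(T)⟩ − ⟨X₀, z(0)⟩ + ∫₀ᵀ ⟨B d(t), 𝒜₀* z(t)⟩ dt − ∫₀ᵀ ⟨𝒜 B d(t), z(t)⟩ dt − ∫₀ᵀ ⟨U(t), z(t)⟩ dt. In particular (taking z(T) = 0) every classical solution is a weak solution associated with (X₀, d, U). -/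
noncomputable section

local notation "⟪" x ", " y "⟫" => @inner ℂ _ _ x y

/-- The variational identity satisfied by classical solutions; in particular every
classical solution is a weak solution. -/
theorem statement_11 {H : Type*} [NormedAddCommGroup H] [InnerProductSpace ℂ H] [CompleteSpace H]
    [TopologicalSpace.SeparableSpace H]
    {m : ℕ} (hm : 0 < m)
    (domA : Set H) (A : H → H) (Bop : H → EuclideanSpace ℂ (Fin m))
    (hdomA : ∀ x ∈ domA, ∀ y ∈ domA, ∀ a b : ℂ, a • x + b • y ∈ domA)
    (hAlin : IsLinearOn A domA) (hBoplin : IsLinearOn Bop domA)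
    (domAstar : Set H) (Astar : H → H)
    (hdense : Dense {x : H | x ∈ domA ∧ Bop x = 0})
    (hadjdom : ∀ z : H, z ∈ domAstar ↔ ∃ w : H, ∀ x ∈ domA, Bop x = 0 → ⟪w, x⟫ = ⟪z, A x⟫)
    (hadj : ∀ z ∈ domAstar, ∀ x ∈ domA, Bop x = 0 → ⟪Astar z, x⟫ = ⟪z, A x⟫)
    (B : EuclideanSpace ℂ (Fin m) →L[ℂ] H)
    (hBdom : ∀ v, B v ∈ domA) (hBlift : ∀ v, Bop (B v) = v)
    (hABcont : Continuous fun v => A (B v))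
    (X0 : H) (d : ℝ → EuclideanSpace ℂ (Fin m)) (U : ℝ → H) (X : ℝ → H)
    (hX0 : X0 ∈ domA) (hd : ContinuousOn d (Set.Ici 0)) (hU : ContinuousOn U (Set.Ici 0))
    (hcomp : Bop X0 = d 0)
    (hX : IsClassicalSolution A Bop domA X0 d U X) :
    (∀ T > (0:ℝ), ∀ z z' : ℝ → H,
      (∀ t ∈ Set.Icc (0:ℝ) T, z t ∈ domAstar) →
      (∀ t ∈ Set.Icc (0:ℝ) T, HasDerivWithinAt z (z' t) (Set.Icc 0 T) t) →
      ContinuousOn z' (Set.Icc 0 T) →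
      ContinuousOn (fun t => Astar (z t)) (Set.Icc 0 T) →
      (∫ t in (0:ℝ)..T, ⟪Astar (z t) + z' t, X t⟫) =
        ⟪z T, X T⟫ - ⟪z 0, X0⟫ + (∫ t in (0:ℝ)..T, ⟪Astar (z t), B (d t)⟫)
          - (∫ t in (0:ℝ)..T, ⟪z t, A (B (d t))⟫)
          - ∫ t in (0:ℝ)..T, ⟪z t, U t⟫) ∧
    IsWeakSolution A domAstar Astar B X0 d U X := by
  obtain ⟨hXcont, hXdom, hAXcont, hXderiv, hX0eq, hBX⟩ := hX
  have main : ∀ T > (0:ℝ), ∀ z z' : ℝ → H,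
      (∀ t ∈ Set.Icc (0:ℝ) T, z t ∈ domAstar) →
      (∀ t ∈ Set.Icc (0:ℝ) T, HasDerivWithinAt z (z' t) (Set.Icc 0 T) t) →
      ContinuousOn z' (Set.Icc 0 T) →
      ContinuousOn (fun t => Astar (z t)) (Set.Icc 0 T) →
      (∫ t in (0:ℝ)..T, ⟪Astar (z t) + z' t, X t⟫) =
        ⟪z T, X T⟫ - ⟪z 0, X0⟫ + (∫ t in (0:ℝ)..T, ⟪Astar (z t), B (d t)⟫)
          - (∫ t in (0:ℝ)..T, ⟪z t, A (B (d t))⟫)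
          - ∫ t in (0:ℝ)..T, ⟪z t, U t⟫ := by
    intro T hT z z' hzdom hzderiv hz'cont hAzcont
    have hTle : (0:ℝ) ≤ T := hT.le
    have hsub : Set.Icc (0:ℝ) T ⊆ Set.Ici 0 := Set.Icc_subset_Ici_self
    have huIcc : Set.uIcc (0:ℝ) T = Set.Icc 0 T := Set.uIcc_of_le hTle
    have hzcont : ContinuousOn z (Set.Icc 0 T) :=
      fun t ht => (hzderiv t ht).continuousWithinAt
    have hXc : ContinuousOn X (Set.Icc 0 T) := hXcont.mono hsub
    have hAXc : ContinuousOn (fun t => A (X t)) (Set.Icc 0 T) := hAXcont.mono hsub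
    have hUc : ContinuousOn U (Set.Icc 0 T) := hU.mono hsub
    have hdc : ContinuousOn d (Set.Icc 0 T) := hd.mono hsub
    have hBdc : ContinuousOn (fun t => B (d t)) (Set.Icc 0 T) :=
      B.continuous.comp_continuousOn hdc
    have hABdc : ContinuousOn (fun t => A (B (d t))) (Set.Icc 0 T) :=
      hABcont.comp_continuousOn hdc
    have hneg : ∀ x ∈ domA, (-1:ℂ) • x ∈ domA := by
      intro x hx
      simpa using hdomA x hx x hx (-1) 0
    -- pointwise identity
    have key : ∀ t ∈ Set.Icc (0:ℝ) T,
        ⟪Astar (z t) + z' t, X t⟫ =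
          (⟪z t, A (X t) + U t⟫ + ⟪z' t, X t⟫) - ⟪z t, U t⟫
            - ⟪z t, A (B (d t))⟫ + ⟪Astar (z t), B (d t)⟫ := by
      intro t ht
      have htI : t ∈ Set.Ici (0:ℝ) := hsub ht
      have hXt : X t ∈ domA := hXdom t htI
      have hBd : B (d t) ∈ domA := hBdom (d t)
      have hBd' : (-1:ℂ) • B (d t) ∈ domA := hneg _ hBd
      have hY : X t + (-1:ℂ) • B (d t) ∈ domA := by
        simpa using hdomA (X t) hXt (B (d t)) hBd 1 (-1)
      have hYker : Bop (X t + (-1:ℂ) • B (d t)) = 0 := by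
        rw [hBoplin.1 _ hXt _ hBd', hBoplin.2 (-1) _ hBd, hBlift, hBX t htI]
        simp
      have hAY : A (X t + (-1:ℂ) • B (d t)) = A (X t) + (-1:ℂ) • A (B (d t)) := by
        rw [hAlin.1 _ hXt _ hBd', hAlin.2 (-1) _ hBd]
      have hEq := hadj (z t) (hzdom t ht) _ hY hYker
      rw [hAY] at hEq
      simp only [inner_add_left, inner_add_right, inner_smul_right] at hEq ⊢
      linear_combination hEq
    -- FTC for F t = ⟪z t, X t⟫
    set F' : ℝ → ℂ := fun t => ⟪z t, A (X t) + U t⟫ + ⟪z' t, X t⟫ with hF'def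
    have hFderiv : ∀ t ∈ Set.Icc (0:ℝ) T,
        HasDerivWithinAt (fun t => ⟪z t, X t⟫) (F' t) (Set.Icc 0 T) t := by
      intro t ht
      exact (hzderiv t ht).inner ℂ ((hXderiv t (hsub ht)).mono hsub)
    have hF'c : ContinuousOn F' (Set.Icc 0 T) :=
      (hzcont.inner (hAXc.add hUc)).add (hz'cont.inner hXc)
    have hFc : ContinuousOn (fun t => ⟪z t, X t⟫) (Set.Icc 0 T) := hzcont.inner hXc
    have hF'int : IntervalIntegrable F' MeasureTheory.volume 0 T :=
      hF'c.intervalIntegrable_of_Icc hTle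
    have hFTC : (∫ t in (0:ℝ)..T, F' t) = ⟪z T, X T⟫ - ⟪z 0, X 0⟫ := by
      refine intervalIntegral.integral_eq_sub_of_hasDeriv_right_of_le hTle hFc ?_ hF'int
      intro t ht
      have h := hFderiv t (Set.mem_Icc_of_Ioo ht)
      exact ((h.hasDerivAt (Icc_mem_nhds ht.1 ht.2)).hasDerivWithinAt)
    -- integrability of the pieces
    have h1 : IntervalIntegrable (fun t => ⟪z t, U t⟫) MeasureTheory.volume 0 T :=
      (hzcont.inner hUc).intervalIntegrable_of_Icc hTle
    have h2 : IntervalIntegrable (fun t => ⟪z t, A (B (d t))⟫) MeasureTheory.volume 0 T :=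
      (hzcont.inner hABdc).intervalIntegrable_of_Icc hTle
    have h3 : IntervalIntegrable (fun t => ⟪Astar (z t), B (d t)⟫) MeasureTheory.volume 0 T :=
      (hAzcont.inner hBdc).intervalIntegrable_of_Icc hTle
    have hcongr : (∫ t in (0:ℝ)..T, ⟪Astar (z t) + z' t, X t⟫) =
        ∫ t in (0:ℝ)..T, (F' t - ⟪z t, U t⟫ - ⟪z t, A (B (d t))⟫ + ⟪Astar (z t), B (d t)⟫) := by
      refine intervalIntegral.integral_congr ?_
      intro t ht
      rw [huIcc] at ht
      exact key t ht
    rw [hcongr, intervalIntegral.integral_add ((hF'int.sub h1).sub h2) h3,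
      intervalIntegral.integral_sub (hF'int.sub h1) h2,
      intervalIntegral.integral_sub hF'int h1, hFTC, hX0eq]
    ring
  refine ⟨main, hXcont, ?_⟩
  intro T hT z z' h1 h2 h3 h4 hzT
  rw [main T hT z z' h1 h2 h3 h4, hzT]
  simp only [inner_zero_left]
  ring
end
end

section
/- Suppose D(𝒜₀*) is dense in H. If X is a weak solution associated with (X₀, d, U), then X(0) = X₀. -/
noncomputable section

local notation "⟪" x ", " y "⟫" => @inner ℂ _ _ x y

lemma dense_ext' {H : Type*} [NormedAddCommGroup H] [InnerProductSpace ℂ H] {S : Set H}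
    (hS : Dense S) {u v : H} (h : ∀ x ∈ S, ⟪u, x⟫ = ⟪v, x⟫) : u = v := by
  have hall : (fun x : H => ⟪u, x⟫) = fun x => ⟪v, x⟫ :=
    Continuous.ext_on hS (continuous_const.inner continuous_id)
      (continuous_const.inner continuous_id) h
  exact ext_inner_right ℂ fun x => congrFun hall x

lemma tendsto_avg' {g : ℝ → ℂ} (hg : ContinuousOn g (Set.Ici 0)) :
    Filter.Tendsto (fun T => (T : ℝ)⁻¹ • ∫ t in (0:ℝ)..T, g t)
      (nhdsWithin 0 (Set.Ioi 0)) (nhds (g 0)) := by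
  have hF : HasDerivWithinAt (fun u => ∫ t in (0:ℝ)..u, g t) (g 0) (Set.Ici 0) 0 := by
    refine intervalIntegral.integral_hasDerivWithinAt_right (t := Set.Ioi 0)
      IntervalIntegrable.refl
      ⟨Set.Ioc 0 1, Ioc_mem_nhdsGT one_pos,
        (hg.mono (Set.Ioc_subset_Icc_self.trans Set.Icc_subset_Ici_self)).aestronglyMeasurable
          measurableSet_Ioc⟩ ?_
    exact (hg 0 Set.self_mem_Ici).mono Set.Ioi_subset_Ici_self
  rw [hasDerivWithinAt_iff_tendsto_slope, Set.Ici_sdiff_left] at hF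
  refine hF.congr' ?_
  filter_upwards [self_mem_nhdsWithin] with T _
  simp [slope_def_module, intervalIntegral.integral_same]

lemma tendsto_weighted' {f : ℝ → ℂ} (hf : ContinuousOn f (Set.Ici 0)) :
    Filter.Tendsto (fun T => ∫ t in (0:ℝ)..T, (((T - t)/T : ℝ) : ℂ) * f t)
      (nhdsWithin 0 (Set.Ioi 0)) (nhds 0) := by
  obtain ⟨C, hC⟩ := isCompact_Icc.exists_bound_of_continuousOn
    (hf.mono (Set.Icc_subset_Ici_self (a := 1) (b := 0)))
  refine squeeze_zero_norm' (a := fun T => C * T) ?_ ?_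
  · filter_upwards [Ioc_mem_nhdsGT one_pos] with T hT
    have hT0 : (0:ℝ) < T := hT.1
    have hb : ∀ x ∈ Set.uIoc (0:ℝ) T, ‖(((T - x)/T : ℝ) : ℂ) * f x‖ ≤ C := by
      intro x hx
      rw [Set.uIoc_of_le hT0.le] at hx
      have hx1 : x ∈ Set.Icc (0:ℝ) 1 := ⟨hx.1.le, hx.2.trans hT.2⟩
      have h1 : ‖(((T - x)/T : ℝ) : ℂ)‖ ≤ 1 := by
        rw [Complex.norm_real, Real.norm_eq_abs,
          abs_of_nonneg (div_nonneg (by linarith [hx.2]) hT0.le)]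
        rw [div_le_one hT0]; linarith [hx.1]
      calc ‖(((T - x)/T : ℝ) : ℂ) * f x‖ = ‖(((T - x)/T : ℝ) : ℂ)‖ * ‖f x‖ := norm_mul _ _
        _ ≤ 1 * C := mul_le_mul h1 (hC x hx1) (norm_nonneg _) zero_le_one
        _ = C := one_mul C
    calc ‖∫ t in (0:ℝ)..T, (((T - t)/T : ℝ) : ℂ) * f t‖ ≤ C * |T - 0| :=
          intervalIntegral.norm_integral_le_of_norm_le_const hb
      _ = C * T := by rw [sub_zero, abs_of_pos hT0]
  · have : Filter.Tendsto (fun T : ℝ => C * T) (nhds 0) (nhds 0) := by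
      simpa using (continuous_mul_left C).tendsto (0:ℝ)
    exact this.mono_left nhdsWithin_le_nhds

/-- A weak solution attains its initial condition (Lemma 4 of the paper). -/
theorem statement_12 {H : Type*} [NormedAddCommGroup H] [InnerProductSpace ℂ H] [CompleteSpace H]
    [TopologicalSpace.SeparableSpace H]
    {m : ℕ} (hm : 0 < m)
    (domA : Set H) (A : H → H) (Bop : H → EuclideanSpace ℂ (Fin m))
    (hdomA : ∀ x ∈ domA, ∀ y ∈ domA, ∀ a b : ℂ, a • x + b • y ∈ domA)
    (hAlin : IsLinearOn A domA) (hBoplin : IsLinearOn Bop domA)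
    (domAstar : Set H) (Astar : H → H)
    (hdense : Dense {x : H | x ∈ domA ∧ Bop x = 0})
    (hadjdom : ∀ z : H, z ∈ domAstar ↔ ∃ w : H, ∀ x ∈ domA, Bop x = 0 → ⟪w, x⟫ = ⟪z, A x⟫)
    (hadj : ∀ z ∈ domAstar, ∀ x ∈ domA, Bop x = 0 → ⟪Astar z, x⟫ = ⟪z, A x⟫)
    (B : EuclideanSpace ℂ (Fin m) →L[ℂ] H)
    (hBdom : ∀ v, B v ∈ domA) (hBlift : ∀ v, Bop (B v) = v)
    (hABcont : Continuous fun v => A (B v))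
    (hdenseAstar : Dense domAstar)
    (X0 : H) (d : ℝ → EuclideanSpace ℂ (Fin m)) (U : ℝ → H) (X : ℝ → H)
    (hd : ContinuousOn d (Set.Ici 0)) (hU : ContinuousOn U (Set.Ici 0))
    (hX : IsWeakSolution A domAstar Astar B X0 d U X) :
    X 0 = X0 := by
  obtain ⟨hXc, hweak⟩ := hX
  have hkey : ∀ z0 ∈ domAstar, ⟪z0, X 0⟫ = ⟪z0, X0⟫ := by
    intro z0 hz0
    set w := Astar z0 with hw
    have hmem : ∀ c : ℂ, c • z0 ∈ domAstar := by
      intro c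
      obtain ⟨w0, hw0⟩ := (hadjdom z0).1 hz0
      refine (hadjdom _).2 ⟨c • w0, fun x hx hbx => ?_⟩
      rw [inner_smul_left, inner_smul_left, hw0 x hx hbx]
    have hsmul : ∀ c : ℂ, Astar (c • z0) = c • w := by
      intro c
      refine dense_ext' hdense fun x hx => ?_
      rw [hadj _ (hmem c) x hx.1 hx.2, inner_smul_left, inner_smul_left, hw,
        ← hadj z0 hz0 x hx.1 hx.2]
    have hXcont : ContinuousOn (fun t => (⟪z0, X t⟫ : ℂ)) (Set.Ici 0) :=
      continuousOn_const.inner hXc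
    have ha : ContinuousOn (fun t => (⟪w, X t⟫ : ℂ)) (Set.Ici 0) :=
      continuousOn_const.inner hXc
    have hbc : ContinuousOn (fun t => (⟪w, B (d t)⟫ : ℂ)) (Set.Ici 0) :=
      continuousOn_const.inner (B.continuous.comp_continuousOn hd)
    have hcc : ContinuousOn (fun t => (⟪z0, A (B (d t))⟫ : ℂ)) (Set.Ici 0) :=
      continuousOn_const.inner (hABcont.comp_continuousOn hd)
    have huc : ContinuousOn (fun t => (⟪z0, U t⟫ : ℂ)) (Set.Ici 0) :=
      continuousOn_const.inner hU
    have hident : ∀ T ∈ Set.Ioi (0:ℝ),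
        (T : ℝ)⁻¹ • (∫ t in (0:ℝ)..T, ⟪z0, X t⟫) =
        ⟪z0, X0⟫ + (∫ t in (0:ℝ)..T, (((T - t)/T : ℝ) : ℂ) * ⟪w, X t⟫)
          - (∫ t in (0:ℝ)..T, (((T - t)/T : ℝ) : ℂ) * ⟪w, B (d t)⟫)
          + (∫ t in (0:ℝ)..T, (((T - t)/T : ℝ) : ℂ) * ⟪z0, A (B (d t))⟫)
          + (∫ t in (0:ℝ)..T, (((T - t)/T : ℝ) : ℂ) * ⟪z0, U t⟫) := by
      intro T hT
      have hT0 : (0:ℝ) < T := hT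
      have hφc : Continuous fun t : ℝ => (((T - t)/T : ℝ) : ℂ) :=
        Complex.continuous_ofReal.comp ((continuous_const.sub continuous_id).div_const T)
      have h1 : ∀ t ∈ Set.Icc (0:ℝ) T, (((T - t)/T : ℝ) : ℂ) • z0 ∈ domAstar :=
        fun t _ => hmem _
      have h2 : ∀ t ∈ Set.Icc (0:ℝ) T,
          HasDerivWithinAt (fun s : ℝ => (((T - s)/T : ℝ) : ℂ) • z0)
            (((-T⁻¹ : ℝ) : ℂ) • z0) (Set.Icc 0 T) t := by
        intro t _
        have hφ : HasDerivAt (fun s : ℝ => (T - s)/T) (-T⁻¹) t := by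
          have := ((hasDerivAt_id t).const_sub T).div_const T
          simpa [neg_div, one_div] using this
        exact ((hφ.ofReal_comp).smul_const z0).hasDerivWithinAt
      have h4 : ContinuousOn (fun t : ℝ => Astar ((((T - t)/T : ℝ) : ℂ) • z0))
          (Set.Icc 0 T) := by
        simp only [hsmul]
        exact (hφc.smul continuous_const).continuousOn
      have h5 : (((T - T)/T : ℝ) : ℂ) • z0 = 0 := by simp
      have key := hweak T hT0 _ _ h1 h2 continuousOn_const h4 h5
      simp only [hsmul, inner_add_left, inner_smul_left, Complex.conj_ofReal] at key
      have hIcc : Set.uIcc (0:ℝ) T = Set.Icc 0 T := Set.uIcc_of_le hT0.le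
      have hsub : Set.Icc (0:ℝ) T ⊆ Set.Ici 0 := fun x hx => hx.1
      have hint1 : IntervalIntegrable (fun t => (((T - t)/T : ℝ) : ℂ) * ⟪w, X t⟫)
          MeasureTheory.volume 0 T := by
        apply ContinuousOn.intervalIntegrable
        rw [hIcc]
        exact hφc.continuousOn.mul (ha.mono hsub)
      have hint2 : IntervalIntegrable (fun t => ((-T⁻¹ : ℝ) : ℂ) * ⟪z0, X t⟫)
          MeasureTheory.volume 0 T := by
        apply ContinuousOn.intervalIntegrable
        rw [hIcc]
        exact continuousOn_const.mul (hXcont.mono hsub)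
      rw [intervalIntegral.integral_add hint1 hint2,
        intervalIntegral.integral_const_mul] at key
      have hT1 : (((T - 0)/T : ℝ) : ℂ) = 1 := by
        rw [sub_zero, div_self hT0.ne']; norm_num
      rw [hT1, one_mul] at key
      rw [Complex.real_smul]
      push_cast at key ⊢
      linear_combination -key
    have hlim1 : Filter.Tendsto (fun T => (T:ℝ)⁻¹ • ∫ t in (0:ℝ)..T, ⟪z0, X t⟫)
        (nhdsWithin 0 (Set.Ioi 0)) (nhds ⟪z0, X 0⟫) := tendsto_avg' hXcont
    have hR : Filter.Tendsto (fun T =>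
        (⟪z0, X0⟫ : ℂ) + (∫ t in (0:ℝ)..T, (((T - t)/T : ℝ) : ℂ) * ⟪w, X t⟫)
          - (∫ t in (0:ℝ)..T, (((T - t)/T : ℝ) : ℂ) * ⟪w, B (d t)⟫)
          + (∫ t in (0:ℝ)..T, (((T - t)/T : ℝ) : ℂ) * ⟪z0, A (B (d t))⟫)
          + (∫ t in (0:ℝ)..T, (((T - t)/T : ℝ) : ℂ) * ⟪z0, U t⟫))
        (nhdsWithin 0 (Set.Ioi 0)) (nhds (⟪z0, X0⟫ + 0 - 0 + 0 + 0)) :=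
      (((tendsto_const_nhds.add (tendsto_weighted' ha)).sub
        (tendsto_weighted' hbc)).add (tendsto_weighted' hcc)).add (tendsto_weighted' huc)
    have := tendsto_nhds_unique
      (hlim1.congr' (by filter_upwards [self_mem_nhdsWithin] with T hT using hident T hT)) hR
    simpa using this
  have hext : (fun x : H => ⟪x, X 0⟫) = fun x : H => ⟪x, X0⟫ :=
    Continuous.ext_on hdenseAstar (continuous_id.inner continuous_const)
      (continuous_id.inner continuous_const) hkey
  exact ext_inner_left ℂ fun x => congrFun hext x
end
end

section
/- Suppose S is a strongly continuous semigroup on H generated by 𝒜₀, and suppose the ISS and existence hypotheses hold. Let X be the weak solution associated with (X₀, d, U), where X₀ ∈ H and d : [0,∞) → ℂ^m, U : [0,∞) → H are continuous. Then for every t₀ > 0, the map t ↦ X(t + t₀) is the unique weak solution associated with (X(t₀), d(· + t₀), U(· + t₀)). -/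
noncomputable section

local notation "⟪" x ", " y "⟫" => @inner ℂ _ _ x y

/-- Comparison functions of class `𝒦`. -/
def ClassK (γ : ℝ → ℝ) : Prop :=
  ContinuousOn γ (Set.Ici 0) ∧ StrictMonoOn γ (Set.Ici 0) ∧ γ 0 = 0 ∧
    ∀ x ∈ Set.Ici (0:ℝ), 0 ≤ γ x

/-- Comparison functions of class `𝒦ℒ`. -/
def ClassKL (β : ℝ → ℝ → ℝ) : Prop :=
  ContinuousOn (fun p : ℝ × ℝ => β p.1 p.2) (Set.Ici 0 ×ˢ Set.Ici 0) ∧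
  (∀ t ∈ Set.Ici (0:ℝ), ClassK fun x => β x t) ∧
  ∀ x > (0:ℝ), StrictAntiOn (β x) (Set.Ici 0) ∧
    Filter.Tendsto (β x) Filter.atTop (nhds 0)
set_option linter.unusedSectionVars false
set_option maxHeartbeats 1000000

open MeasureTheory intervalIntegral Set Filter Topology

namespace WS18

variable {H : Type*} [NormedAddCommGroup H] [InnerProductSpace ℂ H] [CompleteSpace H]

theorem ext_dense {s : Set H} (hs : Dense s) {u v : H}
    (h : ∀ x ∈ s, ⟪u, x⟫ = ⟪v, x⟫) : u = v := by
  refine ext_inner_right ℂ fun w => ?_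
  exact congrFun (Continuous.ext_on hs (continuous_const.inner continuous_id)
    (continuous_const.inner continuous_id) h) w

variable {m : ℕ} {domA : Set H} {A : H → H} {Bop : H → EuclideanSpace ℂ (Fin m)}
  {domAstar : Set H} {Astar : H → H}

theorem astar_eq (hdense : Dense {x : H | x ∈ domA ∧ Bop x = 0})
    (hadj : ∀ z ∈ domAstar, ∀ x ∈ domA, Bop x = 0 → ⟪Astar z, x⟫ = ⟪z, A x⟫)
    {z w : H} (hz : z ∈ domAstar)
    (hw : ∀ x ∈ domA, Bop x = 0 → ⟪w, x⟫ = ⟪z, A x⟫) : Astar z = w :=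
  ext_dense hdense fun x hx => by
    rw [hadj z hz x hx.1 hx.2]; exact (hw x hx.1 hx.2).symm

theorem smul_mem_astar
    (hadjdom : ∀ z : H, z ∈ domAstar ↔
      ∃ w : H, ∀ x ∈ domA, Bop x = 0 → ⟪w, x⟫ = ⟪z, A x⟫)
    (hadj : ∀ z ∈ domAstar, ∀ x ∈ domA, Bop x = 0 → ⟪Astar z, x⟫ = ⟪z, A x⟫)
    {z : H} (hz : z ∈ domAstar) (c : ℂ) : c • z ∈ domAstar := by
  rw [hadjdom]
  exact ⟨c • Astar z, fun x hx hbx => by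
    rw [inner_smul_left, inner_smul_left, hadj z hz x hx hbx]⟩

theorem astar_smul (hdense : Dense {x : H | x ∈ domA ∧ Bop x = 0})
    (hadjdom : ∀ z : H, z ∈ domAstar ↔
      ∃ w : H, ∀ x ∈ domA, Bop x = 0 → ⟪w, x⟫ = ⟪z, A x⟫)
    (hadj : ∀ z ∈ domAstar, ∀ x ∈ domA, Bop x = 0 → ⟪Astar z, x⟫ = ⟪z, A x⟫)
    {z : H} (hz : z ∈ domAstar) (c : ℂ) : Astar (c • z) = c • Astar z :=
  astar_eq hdense hadj (smul_mem_astar hadjdom hadj hz c) fun x hx hbx => by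
    rw [inner_smul_left, inner_smul_left, hadj z hz x hx hbx]

end WS18
namespace WS18
open MeasureTheory intervalIntegral Set Filter Topology
set_option linter.unusedSectionVars false
set_option maxHeartbeats 1000000

variable {H : Type*} [NormedAddCommGroup H] [InnerProductSpace ℂ H] [CompleteSpace H]
variable {m : ℕ} {domA : Set H} {A : H → H} {Bop : H → EuclideanSpace ℂ (Fin m)}
  {domAstar : Set H} {Astar : H → H}

theorem weak_to_scalar
    (hdense : Dense {x : H | x ∈ domA ∧ Bop x = 0})
    (hadjdom : ∀ z : H, z ∈ domAstar ↔
      ∃ w : H, ∀ x ∈ domA, Bop x = 0 → ⟪w, x⟫ = ⟪z, A x⟫)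
    (hadj : ∀ z ∈ domAstar, ∀ x ∈ domA, Bop x = 0 → ⟪Astar z, x⟫ = ⟪z, A x⟫)
    {B : EuclideanSpace ℂ (Fin m) →L[ℂ] H}
    {dd : ℝ → EuclideanSpace ℂ (Fin m)} {UU : ℝ → H} {W0 : H} {W : ℝ → H}
    (hdd : ContinuousOn dd (Set.Ici 0)) (hUU : ContinuousOn UU (Set.Ici 0))
    (hABc : Continuous fun v => A (B v))
    (hW : IsWeakSolution A domAstar Astar B W0 dd UU W)
    {z0 : H} (hz0 : z0 ∈ domAstar) {t : ℝ} (ht : 0 ≤ t) :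
    ⟪z0, W t⟫ = ⟪z0, W0⟫ + ∫ s in (0:ℝ)..t,
      (⟪Astar z0, W s - B (dd s)⟫ + ⟪z0, A (B (dd s)) + UU s⟫) := by
  set T : ℝ := t + 1 with hTdef
  have hT0 : (0:ℝ) < T := by simp only [hTdef]; linarith
  have htT : t ∈ Set.Icc (0:ℝ) T := ⟨ht, by simp only [hTdef]; linarith⟩
  set c : ℝ → ℝ := fun s => max 0 (min s T) with hcdef
  have hc_cont : Continuous c := continuous_const.max (continuous_id.min continuous_const)
  have hc_mem : ∀ s, c s ∈ Set.Icc (0:ℝ) T := fun s =>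
    ⟨le_max_left _ _, max_le (le_of_lt hT0) (min_le_right _ _)⟩
  have hc_id : ∀ s ∈ Set.Icc (0:ℝ) T, c s = s := fun s hs => by
    simp only [hcdef, min_eq_left hs.2, max_eq_right hs.1]
  have hIccIci : Set.Icc (0:ℝ) T ⊆ Set.Ici 0 := fun s hs => hs.1
  have hWcc : Continuous fun s => W (c s) :=
    hW.1.comp_continuous hc_cont fun s => hIccIci (hc_mem s)
  have hddc : Continuous fun s => dd (c s) :=
    hdd.comp_continuous hc_cont fun s => hIccIci (hc_mem s)
  have hUUc : Continuous fun s => UU (c s) :=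
    hUU.comp_continuous hc_cont fun s => hIccIci (hc_mem s)
  have hBddc : Continuous fun s => (B (dd (c s)) : H) := B.continuous.comp hddc
  have hABddc : Continuous fun s => A (B (dd (c s))) := hABc.comp hddc
  set f : ℝ → ℂ := fun s => ⟪z0, W (c s)⟫ with hfdef
  set ha : ℝ → ℂ := fun s => ⟪Astar z0, W (c s)⟫ with hadef
  set hb : ℝ → ℂ := fun s => ⟪Astar z0, (B (dd (c s)) : H)⟫ with hbdef
  set hcc : ℝ → ℂ := fun s => ⟪z0, A (B (dd (c s)))⟫ with hccdef
  set he : ℝ → ℂ := fun s => ⟪z0, UU (c s)⟫ with hedef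
  set hh : ℝ → ℂ := fun s =>
    ⟪Astar z0, W (c s) - (B (dd (c s)) : H)⟫ + ⟪z0, A (B (dd (c s))) + UU (c s)⟫ with hhdef
  have hh_split : ∀ s, hh s = ha s - hb s + (hcc s + he s) := fun s => by
    simp only [hhdef, hadef, hbdef, hccdef, hedef, inner_sub_right, inner_add_right]
  have hf_cont : Continuous f := continuous_const.inner hWcc
  have hha_cont : Continuous ha := continuous_const.inner hWcc
  have hhb_cont : Continuous hb := continuous_const.inner hBddc
  have hhc_cont : Continuous hcc := continuous_const.inner hABddc
  have hhe_cont : Continuous he := continuous_const.inner hUUc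
  have hh_cont : Continuous hh :=
    (continuous_const.inner (hWcc.sub hBddc)).add (continuous_const.inner (hABddc.add hUUc))
  set Hc : ℝ → ℂ := fun s => ∫ u in (0:ℝ)..s, hh u with hHcdef
  have hHc_deriv : ∀ x : ℝ, HasDerivAt Hc (hh x) x := fun x =>
    (hh_cont.integral_hasStrictDerivAt 0 x).hasDerivAt
  have hHc_cont : Continuous Hc :=
    continuous_iff_continuousAt.mpr fun x => (hHc_deriv x).continuousAt
  have hHc0 : Hc 0 = 0 := integral_same
  set f0 : ℂ := ⟪z0, W0⟫ with hf0def
  set g : ℝ → ℂ := fun s => f s - f0 - Hc s with hgdef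
  have hg_cont : Continuous g := (hf_cont.sub continuous_const).sub hHc_cont
  have key : ∀ ψ : ℝ → ℂ, Continuous ψ → (∫ s in (0:ℝ)..T, ψ s * g s) = 0 := by
    intro ψ hψ
    set η : ℝ → ℂ := fun s => ∫ u in T..s, ψ u with hηdef
    have hη_deriv : ∀ x : ℝ, HasDerivAt η (ψ x) x := fun x =>
      (hψ.integral_hasStrictDerivAt T x).hasDerivAt
    have hη_cont : Continuous η :=
      continuous_iff_continuousAt.mpr fun x => (hη_deriv x).continuousAt
    have hηT : η T = 0 := integral_same
    set z : ℝ → H := fun s => star (η s) • z0 with hzdef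
    set z' : ℝ → H := fun s => star (ψ s) • z0 with hz'def
    have hzdom : ∀ s ∈ Set.Icc (0:ℝ) T, z s ∈ domAstar := fun s _ =>
      smul_mem_astar hadjdom hadj hz0 _
    have hzderiv : ∀ s ∈ Set.Icc (0:ℝ) T, HasDerivWithinAt z (z' s) (Set.Icc 0 T) s :=
      fun s _ => (((hη_deriv s).star).smul_const z0).hasDerivWithinAt
    have hz'c : ContinuousOn z' (Set.Icc 0 T) :=
      ((continuous_star.comp hψ).smul continuous_const).continuousOn
    have hAz : ∀ s : ℝ, Astar (z s) = star (η s) • Astar z0 := fun s =>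
      astar_smul hdense hadjdom hadj hz0 _
    have hAzc : ContinuousOn (fun s => Astar (z s)) (Set.Icc 0 T) := by
      have hfun : (fun s => Astar (z s)) = fun s => star (η s) • Astar z0 := funext hAz
      rw [hfun]
      exact ((continuous_star.comp hη_cont).smul continuous_const).continuousOn
    have hzT : z T = 0 := by simp [hzdef, hηT]
    have main := hW.2 T hT0 z z' hzdom hzderiv hz'c hAzc hzT
    have inta : IntervalIntegrable (fun s => η s * ha s) volume 0 T :=
      (hη_cont.mul hha_cont).intervalIntegrable 0 T
    have intb : IntervalIntegrable (fun s => η s * hb s) volume 0 T :=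
      (hη_cont.mul hhb_cont).intervalIntegrable 0 T
    have intc : IntervalIntegrable (fun s => η s * hcc s) volume 0 T :=
      (hη_cont.mul hhc_cont).intervalIntegrable 0 T
    have inte : IntervalIntegrable (fun s => η s * he s) volume 0 T :=
      (hη_cont.mul hhe_cont).intervalIntegrable 0 T
    have intf : IntervalIntegrable (fun s => ψ s * f s) volume 0 T :=
      (hψ.mul hf_cont).intervalIntegrable 0 T
    have intHc : IntervalIntegrable (fun s => ψ s * Hc s) volume 0 T :=
      (hψ.mul hHc_cont).intervalIntegrable 0 T
    have intc0 : IntervalIntegrable (fun s => ψ s * f0) volume 0 T :=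
      (hψ.mul continuous_const).intervalIntegrable 0 T
    have e1 : (∫ s in (0:ℝ)..T, ⟪Astar (z s) + z' s, W s⟫)
        = (∫ s in (0:ℝ)..T, η s * ha s) + ∫ s in (0:ℝ)..T, ψ s * f s := by
      rw [← intervalIntegral.integral_add inta intf]
      refine intervalIntegral.integral_congr fun s hs => ?_
      rw [Set.uIcc_of_le hT0.le] at hs
      simp only [hAz, hz'def, hadef, hfdef, hc_id s hs, inner_add_left, inner_smul_left,
        starRingEnd_apply, star_star]
    have e2 : (∫ s in (0:ℝ)..T, ⟪Astar (z s), (B (dd s) : H)⟫)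
        = ∫ s in (0:ℝ)..T, η s * hb s := by
      refine intervalIntegral.integral_congr fun s hs => ?_
      rw [Set.uIcc_of_le hT0.le] at hs
      simp only [hAz, hbdef, hc_id s hs, inner_smul_left, starRingEnd_apply, star_star]
    have e3 : (∫ s in (0:ℝ)..T, ⟪z s, A (B (dd s))⟫)
        = ∫ s in (0:ℝ)..T, η s * hcc s := by
      refine intervalIntegral.integral_congr fun s hs => ?_
      rw [Set.uIcc_of_le hT0.le] at hs
      simp only [hzdef, hccdef, hc_id s hs, inner_smul_left, starRingEnd_apply, star_star]
    have e4 : (∫ s in (0:ℝ)..T, ⟪z s, UU s⟫)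
        = ∫ s in (0:ℝ)..T, η s * he s := by
      refine intervalIntegral.integral_congr fun s hs => ?_
      rw [Set.uIcc_of_le hT0.le] at hs
      simp only [hzdef, hedef, hc_id s hs, inner_smul_left, starRingEnd_apply, star_star]
    have e5 : ⟪z 0, W0⟫ = η 0 * f0 := by
      simp only [hzdef, hf0def, inner_smul_left, starRingEnd_apply, star_star]
    rw [e1, e2, e3, e4, e5] at main
    have hibp := intervalIntegral.integral_mul_deriv_eq_deriv_mul
      (u := η) (u' := ψ) (v := Hc) (v' := hh)
      (fun x _ => hη_deriv x) (fun x _ => hHc_deriv x)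
      (hψ.intervalIntegrable 0 T) (hh_cont.intervalIntegrable 0 T)
    have hibp' : (∫ s in (0:ℝ)..T, η s * hh s) = - ∫ s in (0:ℝ)..T, ψ s * Hc s := by
      rw [hibp, hηT, hHc0]; ring
    have hsplit : (∫ s in (0:ℝ)..T, η s * hh s)
        = (∫ s in (0:ℝ)..T, η s * ha s) - (∫ s in (0:ℝ)..T, η s * hb s)
          + ((∫ s in (0:ℝ)..T, η s * hcc s) + ∫ s in (0:ℝ)..T, η s * he s) := by
      rw [← intervalIntegral.integral_add intc inte, ← intervalIntegral.integral_sub inta intb,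
        ← intervalIntegral.integral_add ((inta.sub intb)) (intc.add inte)]
      refine intervalIntegral.integral_congr fun s hs => ?_
      rw [hh_split]; ring
    have hgsplit : (∫ s in (0:ℝ)..T, ψ s * g s)
        = (∫ s in (0:ℝ)..T, ψ s * f s) - (∫ s in (0:ℝ)..T, ψ s * f0)
          - ∫ s in (0:ℝ)..T, ψ s * Hc s := by
      rw [← intervalIntegral.integral_sub intf intc0,
        ← intervalIntegral.integral_sub (intf.sub intc0) intHc]
      refine intervalIntegral.integral_congr fun s hs => ?_
      simp only [hgdef]; ring
    have hη0 : η 0 = - ∫ s in (0:ℝ)..T, ψ s := intervalIntegral.integral_symm 0 T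
    have hconst : (∫ s in (0:ℝ)..T, ψ s * f0) = (∫ s in (0:ℝ)..T, ψ s) * f0 :=
      intervalIntegral.integral_mul_const f0 ψ
    rw [hgsplit, hconst]
    linear_combination main + hsplit - hibp' - f0 * hη0
  have hgzero : ∀ s ∈ Set.Icc (0:ℝ) T, g s = 0 := by
    intro s hs
    have h0 := key (fun u => star (g u)) (continuous_star.comp hg_cont)
    have h1 : (∫ u in (0:ℝ)..T, ((Complex.normSq (g u) : ℝ) : ℂ)) = 0 := by
      rw [← h0]
      refine intervalIntegral.integral_congr fun u _ => ?_
      rw [Complex.normSq_eq_conj_mul_self]; rfl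
    rw [intervalIntegral.integral_ofReal] at h1
    have h2 : (∫ u in (0:ℝ)..T, Complex.normSq (g u)) = 0 := by exact_mod_cast h1
    by_contra hne
    have hpos : 0 < ∫ u in (0:ℝ)..T, Complex.normSq (g u) :=
      intervalIntegral.integral_pos hT0
        (Complex.continuous_normSq.comp hg_cont).continuousOn
        (fun u _ => Complex.normSq_nonneg _)
        ⟨s, hs, Complex.normSq_pos.mpr hne⟩
    exact absurd h2 (ne_of_gt hpos)
  have hgt := hgzero t htT
  simp only [hgdef, hfdef, hc_id t htT] at hgt
  have hHct : Hc t = ∫ s in (0:ℝ)..t,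
      (⟪Astar z0, W s - B (dd s)⟫ + ⟪z0, A (B (dd s)) + UU s⟫) := by
    refine intervalIntegral.integral_congr fun s hs => ?_
    rw [Set.uIcc_of_le ht] at hs
    have hsT : s ∈ Set.Icc (0:ℝ) T := ⟨hs.1, hs.2.trans htT.2⟩
    simp only [hhdef, hc_id s hsT]
  rw [hHct] at hgt
  linear_combination hgt

end WS18
namespace WS18
open MeasureTheory intervalIntegral Set Filter Topology

theorem scalar_to_weak
    {H : Type*} [NormedAddCommGroup H] [InnerProductSpace ℂ H] [CompleteSpace H]
    {m : ℕ} {A : H → H} {domAstar : Set H} {Astar : H → H}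
    {B : EuclideanSpace ℂ (Fin m) →L[ℂ] H}
    {dd : ℝ → EuclideanSpace ℂ (Fin m)} {UU : ℝ → H} {W0 : H} {W : ℝ → H}
    (hdd : ContinuousOn dd (Set.Ici 0)) (hUU : ContinuousOn UU (Set.Ici 0))
    (hABc : Continuous fun v => A (B v))
    (hWc : ContinuousOn W (Set.Ici 0))
    (hsc : ∀ z0 ∈ domAstar, ∀ t : ℝ, 0 ≤ t →
      ⟪z0, W t⟫ = ⟪z0, W0⟫ + ∫ s in (0:ℝ)..t,
        (⟪Astar z0, W s - B (dd s)⟫ + ⟪z0, A (B (dd s)) + UU s⟫)) :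
    IsWeakSolution A domAstar Astar B W0 dd UU W := by
  refine ⟨hWc, fun T hT0 z z' hzdom hzderiv hz'c hAzc hzT => ?_⟩
  set c : ℝ → ℝ := fun s => max 0 (min s T) with hcdef
  have hc_cont : Continuous c := continuous_const.max (continuous_id.min continuous_const)
  have hc_mem : ∀ s, c s ∈ Set.Icc (0:ℝ) T := fun s =>
    ⟨le_max_left _ _, max_le (le_of_lt hT0) (min_le_right _ _)⟩
  have hc_id : ∀ s ∈ Set.Icc (0:ℝ) T, c s = s := fun s hs => by
    simp only [hcdef, min_eq_left hs.2, max_eq_right hs.1]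
  have hIccIci : Set.Icc (0:ℝ) T ⊆ Set.Ici 0 := fun s hs => hs.1
  have hWcc : Continuous fun s => W (c s) :=
    hWc.comp_continuous hc_cont fun s => hIccIci (hc_mem s)
  have hddc : Continuous fun s => dd (c s) :=
    hdd.comp_continuous hc_cont fun s => hIccIci (hc_mem s)
  have hUUc : Continuous fun s => UU (c s) :=
    hUU.comp_continuous hc_cont fun s => hIccIci (hc_mem s)
  have hBddc : Continuous fun s => (B (dd (c s)) : H) := B.continuous.comp hddc
  have hABddc : Continuous fun s => A (B (dd (c s))) := hABc.comp hddc
  have hWIcc : ContinuousOn W (Set.Icc 0 T) := hWc.mono hIccIci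
  set q : H → ℝ → ℂ := fun z0 s =>
    ⟪Astar z0, W (c s) - (B (dd (c s)) : H)⟫ + ⟪z0, A (B (dd (c s))) + UU (c s)⟫ with hqdef
  have hq_cont : ∀ z0 : H, Continuous (q z0) := fun z0 =>
    (continuous_const.inner (hWcc.sub hBddc)).add (continuous_const.inner (hABddc.add hUUc))
  -- the scalar functions s ↦ ⟪z0, W s⟫ are differentiable with derivative q z0
  have hscalar_deriv : ∀ z0 ∈ domAstar, ∀ t ∈ Set.Icc (0:ℝ) T,
      HasDerivWithinAt (fun s => ⟪z0, W s⟫) (q z0 t) (Set.Icc 0 T) t := by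
    intro z0 hz0 t htm
    have hP : HasDerivAt (fun s => ⟪z0, W0⟫ + ∫ u in (0:ℝ)..s, q z0 u) (q z0 t) t :=
      HasDerivAt.const_add _ ((hq_cont z0).integral_hasStrictDerivAt 0 t).hasDerivAt
    refine HasDerivWithinAt.congr hP.hasDerivWithinAt (fun s hs => ?_) ?_
    · rw [hsc z0 hz0 s hs.1]
      congr 1
      refine intervalIntegral.integral_congr fun u hu => ?_
      rw [Set.uIcc_of_le hs.1] at hu
      have huT : u ∈ Set.Icc (0:ℝ) T := ⟨hu.1, hu.2.trans hs.2⟩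
      simp only [hqdef, hc_id u huT]
    · rw [hsc z0 hz0 t htm.1]
      congr 1
      refine intervalIntegral.integral_congr fun u hu => ?_
      rw [Set.uIcc_of_le htm.1] at hu
      have huT : u ∈ Set.Icc (0:ℝ) T := ⟨hu.1, hu.2.trans htm.2⟩
      simp only [hqdef, hc_id u huT]
  have hzc : ContinuousOn z (Set.Icc 0 T) := fun t ht =>
    (hzderiv t ht).continuousWithinAt
  set G : ℝ → ℂ := fun s => ⟪z s, W s⟫ with hGdef
  set Gd : ℝ → ℂ := fun s => ⟪z' s, W s⟫ + q (z s) s with hGddef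
  have hGd : ∀ t ∈ Set.Icc (0:ℝ) T, HasDerivWithinAt G (Gd t) (Set.Icc 0 T) t := by
    intro t htm
    have h2 : HasDerivWithinAt (fun s => ⟪z t, W s⟫) (q (z t) t) (Set.Icc 0 T) t :=
      hscalar_deriv (z t) (hzdom t htm) t htm
    have h1 : HasDerivWithinAt (fun s => ⟪z s - z t, W s⟫) ⟪z' t, W t⟫ (Set.Icc 0 T) t := by
      rw [hasDerivWithinAt_iff_tendsto_slope]
      have hslope : Filter.Tendsto (slope z t) (nhdsWithin t (Set.Icc 0 T \ {t}))
          (nhds (z' t)) := hasDerivWithinAt_iff_tendsto_slope.mp (hzderiv t htm)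
      have hWt : Filter.Tendsto W (nhdsWithin t (Set.Icc 0 T \ {t})) (nhds (W t)) :=
        (hWIcc t htm).tendsto.mono_left (nhdsWithin_mono t Set.diff_subset)
      refine Filter.Tendsto.congr (fun s => ?_) (hslope.inner hWt)
      simp only [slope_def_module, sub_self, inner_zero_left, sub_zero]
      rw [← algebraMap_smul ℂ (s - t)⁻¹ (z s - z t), inner_smul_left]
      simp [Complex.coe_algebraMap, Complex.conj_ofReal, Complex.real_smul, inner_sub_left]
    have hsum := h1.add h2
    refine HasDerivWithinAt.congr hsum (fun s _ => ?_) ?_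
    · simp only [hGdef, inner_sub_left, Pi.add_apply]; ring
    · simp only [hGdef, inner_sub_left, Pi.add_apply]; ring
  have hGcont : ContinuousOn G (Set.Icc 0 T) := hzc.inner hWIcc
  have hGdcont : ContinuousOn Gd (Set.Icc 0 T) := by
    refine ContinuousOn.add (hz'c.inner hWIcc) ?_
    exact ContinuousOn.add (hAzc.inner ((hWcc.sub hBddc).continuousOn))
      (hzc.inner ((hABddc.add hUUc).continuousOn))
  have hGdint : IntervalIntegrable Gd volume 0 T := by
    rw [intervalIntegrable_iff_integrableOn_Icc_of_le hT0.le] at *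
    exact hGdcont.integrableOn_compact isCompact_Icc
  have hftc := intervalIntegral.integral_eq_sub_of_hasDeriv_right_of_le hT0.le hGcont
    (fun x hx => (hGd x (Set.mem_Icc_of_Ioo hx)).mono_of_mem_nhdsWithin
      (Icc_mem_nhdsGT_of_mem ⟨hx.1.le, hx.2⟩)) hGdint
  have hGT : G T = 0 := by simp [hGdef, hzT]
  have hG0 : G 0 = ⟪z 0, W0⟫ := by
    have := hsc (z 0) (hzdom 0 ⟨le_rfl, hT0.le⟩) 0 le_rfl
    simp only [intervalIntegral.integral_same, add_zero] at this
    simpa [hGdef] using this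
  rw [hGT, hG0] at hftc
  -- hftc : ∫ s in 0..T, Gd s = 0 - ⟪z 0, W0⟫
  have intW : IntervalIntegrable (fun s => ⟪Astar (z s) + z' s, W s⟫) volume 0 T := by
    rw [intervalIntegrable_iff_integrableOn_Icc_of_le hT0.le]
    exact (((hAzc.add hz'c).inner hWIcc)).integrableOn_compact isCompact_Icc
  have intb : IntervalIntegrable (fun s => ⟪Astar (z s), (B (dd s) : H)⟫) volume 0 T := by
    rw [intervalIntegrable_iff_integrableOn_Icc_of_le hT0.le]
    refine (hAzc.inner ((B.continuous.comp_continuousOn (hdd.mono hIccIci)))).integrableOn_compact isCompact_Icc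
  have intc2 : IntervalIntegrable (fun s => ⟪z s, A (B (dd s))⟫) volume 0 T := by
    rw [intervalIntegrable_iff_integrableOn_Icc_of_le hT0.le]
    exact (hzc.inner (hABc.comp_continuousOn (hdd.mono hIccIci))).integrableOn_compact isCompact_Icc
  have inte : IntervalIntegrable (fun s => ⟪z s, UU s⟫) volume 0 T := by
    rw [intervalIntegrable_iff_integrableOn_Icc_of_le hT0.le]
    exact (hzc.inner (hUU.mono hIccIci)).integrableOn_compact isCompact_Icc
  have hGdsplit : (∫ s in (0:ℝ)..T, Gd s)
      = (∫ s in (0:ℝ)..T, ⟪Astar (z s) + z' s, W s⟫)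
        - (∫ s in (0:ℝ)..T, ⟪Astar (z s), (B (dd s) : H)⟫)
        + ((∫ s in (0:ℝ)..T, ⟪z s, A (B (dd s))⟫) + ∫ s in (0:ℝ)..T, ⟪z s, UU s⟫) := by
    rw [← intervalIntegral.integral_add intc2 inte, ← intervalIntegral.integral_sub intW intb,
      ← intervalIntegral.integral_add ((intW.sub intb)) (intc2.add inte)]
    refine intervalIntegral.integral_congr fun s hs => ?_
    rw [Set.uIcc_of_le hT0.le] at hs
    simp only [hGddef, hqdef, hc_id s hs, inner_add_left, inner_sub_right, inner_add_right]
    ring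
  rw [hGdsplit] at hftc
  linear_combination hftc

end WS18
namespace WS18
open MeasureTheory intervalIntegral Set Filter Topology
set_option maxHeartbeats 1000000

variable {H : Type*} [NormedAddCommGroup H] [InnerProductSpace ℂ H] [CompleteSpace H]

theorem semigroup_bound {S : ℝ → H →L[ℂ] H}
    (hS0 : S 0 = ContinuousLinearMap.id ℂ H)
    (hSadd : ∀ t ∈ Set.Ici (0:ℝ), ∀ s ∈ Set.Ici (0:ℝ), S (t + s) = (S t).comp (S s))
    (hScont : ∀ x : H, ContinuousOn (fun t => S t x) (Set.Ici 0)) :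
    ∃ M ω : ℝ, 1 ≤ M ∧ 0 ≤ ω ∧ ∀ t : ℝ, 0 ≤ t → ‖S t‖ ≤ M * Real.exp (ω * t) := by
  have hpt : ∀ x : H, ∃ C, ∀ i : Set.Icc (0:ℝ) 1, ‖S i x‖ ≤ C := by
    intro x
    obtain ⟨C, hC⟩ := (isCompact_Icc (a := (0:ℝ)) (b := 1)).exists_bound_of_continuousOn
      ((hScont x).mono fun s hs => hs.1)
    exact ⟨C, fun i => hC i i.2⟩
  obtain ⟨C', hC'⟩ := banach_steinhaus (g := fun i : Set.Icc (0:ℝ) 1 => S i) hpt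
  set M : ℝ := max C' 1 with hM
  have hM1 : 1 ≤ M := le_max_right _ _
  have hM0 : 0 < M := lt_of_lt_of_le one_pos hM1
  have hIcc : ∀ τ : ℝ, 0 ≤ τ → τ ≤ 1 → ‖S τ‖ ≤ M := fun τ h0 h1 =>
    (hC' ⟨τ, h0, h1⟩).trans (le_max_left _ _)
  have hn : ∀ n : ℕ, ∀ τ : ℝ, 0 ≤ τ → τ ≤ 1 → ‖S ((n : ℝ) + τ)‖ ≤ M ^ (n + 1) := by
    intro n
    induction n with
    | zero => intro τ h0 h1; simpa using hIcc τ h0 h1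
    | succ k ih =>
      intro τ h0 h1
      have heq : ((k + 1 : ℕ) : ℝ) + τ = ((k : ℝ) + τ) + 1 := by push_cast; ring
      rw [heq, hSadd _ (Set.mem_Ici.mpr (by positivity)) 1 (Set.mem_Ici.mpr (by norm_num))]
      calc ‖(S ((k : ℝ) + τ)).comp (S 1)‖
          ≤ ‖S ((k : ℝ) + τ)‖ * ‖S 1‖ := ContinuousLinearMap.opNorm_comp_le _ _
        _ ≤ M ^ (k + 1) * M :=
            mul_le_mul (ih τ h0 h1) (hIcc 1 zero_le_one le_rfl) (norm_nonneg _) (by positivity)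
        _ = M ^ (k + 1 + 1) := by ring
  refine ⟨M, Real.log M, hM1, Real.log_nonneg hM1, fun t h0t => ?_⟩
  set n := ⌊t⌋₊ with hndef
  have hfl : (n : ℝ) ≤ t := Nat.floor_le h0t
  have hfu : t < n + 1 := Nat.lt_floor_add_one t
  have h1 : ‖S t‖ ≤ M ^ (n + 1) := by
    have h2 := hn n (t - n) (by linarith) (by linarith)
    have h3 : (n : ℝ) + (t - n) = t := by ring
    rwa [h3] at h2
  calc ‖S t‖ ≤ M ^ (n + 1) := h1
    _ = M * M ^ n := by ring
    _ = M * Real.exp (Real.log M * n) := by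
        rw [mul_comm (Real.log M), Real.exp_nat_mul, Real.exp_log hM0]
    _ ≤ M * Real.exp (Real.log M * t) := by
        refine mul_le_mul_of_nonneg_left ?_ hM0.le
        exact Real.exp_le_exp.mpr (mul_le_mul_of_nonneg_left hfl (Real.log_nonneg hM1))

end WS18
namespace WS18
open MeasureTheory intervalIntegral Set Filter Topology
set_option maxHeartbeats 1000000

variable {H : Type*} [NormedAddCommGroup H] [InnerProductSpace ℂ H] [CompleteSpace H]

theorem resolvent_exists {S : ℝ → H →L[ℂ] H} {domA0 : Set H} {A : H → H}
    (hS : IsC0SemigroupGeneratedBy S domA0 A) :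
    ∃ (lam : ℝ) (R : H →L[ℂ] H),
      (∀ y : H, R y ∈ domA0 ∧ A (R y) = lam • R y - y) ∧
      (∀ x ∈ domA0, R (A x) = lam • R x - x) := by
  obtain ⟨hS0, hSadd, hScont, hSdom, hSgen⟩ := hS
  obtain ⟨M, ω, hM1, hω0, hbound⟩ := semigroup_bound hS0 hSadd hScont
  set lam : ℝ := ω + 1 with hlamdef
  set g : H → ℝ → H := fun y t => Real.exp (-lam * t) • S t y with hgdef
  have hg_contOn : ∀ y : H, ContinuousOn (g y) (Set.Ici 0) := fun y =>
    ((Real.continuous_exp.comp (continuous_const.mul continuous_id)).continuousOn).smul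
      (hScont y)
  have hg_bound : ∀ y : H, ∀ t : ℝ, 0 ≤ t → ‖g y t‖ ≤ (M * ‖y‖) * Real.exp (-t) := by
    intro y t ht
    have h1 : ‖g y t‖ = Real.exp (-lam * t) * ‖S t y‖ := by
      simp [hgdef, norm_smul, Real.abs_exp]
    have h2 : ‖S t y‖ ≤ M * Real.exp (ω * t) * ‖y‖ :=
      ((S t).le_opNorm y).trans (mul_le_mul_of_nonneg_right (hbound t ht) (norm_nonneg _))
    have h3 : Real.exp (-lam * t) * (M * Real.exp (ω * t) * ‖y‖)
        = (M * ‖y‖) * Real.exp (-t) := by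
      have h4 : Real.exp (-lam * t) * Real.exp (ω * t) = Real.exp (-t) := by
        rw [← Real.exp_add]; congr 1; simp only [hlamdef]; ring
      calc Real.exp (-lam * t) * (M * Real.exp (ω * t) * ‖y‖)
          = (Real.exp (-lam * t) * Real.exp (ω * t)) * (M * ‖y‖) := by ring
        _ = (M * ‖y‖) * Real.exp (-t) := by rw [h4]; ring
    calc ‖g y t‖ = Real.exp (-lam * t) * ‖S t y‖ := h1
      _ ≤ Real.exp (-lam * t) * (M * Real.exp (ω * t) * ‖y‖) :=
          mul_le_mul_of_nonneg_left h2 (Real.exp_pos _).le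
      _ = (M * ‖y‖) * Real.exp (-t) := h3
  have hexp_int : IntegrableOn (fun t : ℝ => Real.exp (-t)) (Set.Ioi 0) := by
    simpa using exp_neg_integrableOn_Ioi 0 (by norm_num : (0:ℝ) < 1)
  have hg_meas : ∀ y : H, AEStronglyMeasurable (g y) (volume.restrict (Set.Ioi 0)) := fun y =>
    ((hg_contOn y).mono Set.Ioi_subset_Ici_self).aestronglyMeasurable measurableSet_Ioi
  have hg_int : ∀ y : H, IntegrableOn (g y) (Set.Ioi 0) := by
    intro y
    refine Integrable.mono' (hexp_int.const_mul (M * ‖y‖)) (hg_meas y) ?_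
    refine (ae_restrict_iff' measurableSet_Ioi).mpr (Filter.Eventually.of_forall ?_)
    exact fun t ht => hg_bound y t (le_of_lt ht)
  -- linearity and boundedness, construction of R
  have hadd : ∀ y₁ y₂ : H, (∫ t in Set.Ioi (0:ℝ), g (y₁ + y₂) t)
      = (∫ t in Set.Ioi (0:ℝ), g y₁ t) + ∫ t in Set.Ioi (0:ℝ), g y₂ t := by
    intro y₁ y₂
    rw [← integral_add (hg_int y₁) (hg_int y₂)]
    exact setIntegral_congr_fun measurableSet_Ioi fun t _ => by simp [hgdef, smul_add]
  have hsmul : ∀ (a : ℂ) (y : H), (∫ t in Set.Ioi (0:ℝ), g (a • y) t)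
      = a • ∫ t in Set.Ioi (0:ℝ), g y t := by
    intro a y
    rw [← MeasureTheory.integral_smul]
    exact setIntegral_congr_fun measurableSet_Ioi fun t _ => by
      simp [hgdef, smul_comm a]
  set Cexp : ℝ := ∫ t in Set.Ioi (0:ℝ), Real.exp (-t) with hCexpdef
  have hRbound : ∀ y : H, ‖∫ t in Set.Ioi (0:ℝ), g y t‖ ≤ (M * Cexp) * ‖y‖ := by
    intro y
    calc ‖∫ t in Set.Ioi (0:ℝ), g y t‖
        ≤ ∫ t in Set.Ioi (0:ℝ), (M * ‖y‖) * Real.exp (-t) := by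
          refine norm_integral_le_of_norm_le (hexp_int.const_mul _) ?_
          exact (ae_restrict_iff' measurableSet_Ioi).mpr
            (Filter.Eventually.of_forall fun t ht => hg_bound y t (le_of_lt ht))
      _ = (M * ‖y‖) * Cexp := integral_const_mul _ _
      _ = (M * Cexp) * ‖y‖ := by ring
  set R : H →L[ℂ] H := LinearMap.mkContinuous
    { toFun := fun y => ∫ t in Set.Ioi (0:ℝ), g y t
      map_add' := hadd
      map_smul' := hsmul } (M * Cexp) hRbound with hRdef
  have hRapp : ∀ y : H, R y = ∫ t in Set.Ioi (0:ℝ), g y t := fun y => rfl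
  -- commutation with the integral
  have hSg : ∀ h : ℝ, 0 ≤ h → ∀ y : H, ∀ t : ℝ, 0 ≤ t →
      S h (g y t) = Real.exp (-lam * t) • S (t + h) y := by
    intro h hh y t ht
    simp only [hgdef, ContinuousLinearMap.map_smul_of_tower]
    congr 1
    rw [add_comm, hSadd h (Set.mem_Ici.mpr hh) t (Set.mem_Ici.mpr ht)]
    rfl
  have hcomm : ∀ h : ℝ, 0 ≤ h → ∀ y : H,
      S h (R y) = ∫ t in Set.Ioi (0:ℝ), Real.exp (-lam * t) • S (t + h) y := by
    intro h hh y
    rw [hRapp, ← ContinuousLinearMap.integral_comp_comm (S h) (hg_int y)]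
    exact setIntegral_congr_fun measurableSet_Ioi fun t ht => hSg h hh y t (le_of_lt ht)
  have hcomm2 : ∀ h : ℝ, 0 ≤ h → ∀ y : H, R (S h y) = S h (R y) := by
    intro h hh y
    rw [hcomm h hh y, hRapp]
    refine setIntegral_congr_fun measurableSet_Ioi fun t ht => ?_
    simp only [hgdef]
    congr 1
    rw [hSadd t (Set.mem_Ici.mpr (le_of_lt ht)) h (Set.mem_Ici.mpr hh)]
    rfl
  -- change of variables
  have hcov : ∀ y : H, ∀ h : ℝ,
      (∫ t in Set.Ioi (0:ℝ), g y (t + h)) = ∫ t in Set.Ioi h, g y t := by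
    intro y h
    rw [← MeasureTheory.integral_indicator measurableSet_Ioi, ← MeasureTheory.integral_indicator measurableSet_Ioi,
      ← integral_add_right_eq_self ((Set.Ioi h).indicator (g y)) h]
    congr 1
    funext x
    simp [Set.indicator_apply, Set.mem_Ioi, lt_add_iff_pos_left]
  have hJ : ∀ h : ℝ, 0 ≤ h → ∀ y : H,
      S h (R y) = Real.exp (lam * h) • ∫ t in Set.Ioi h, g y t := by
    intro h hh y
    rw [hcomm h hh y, ← hcov y h, ← MeasureTheory.integral_smul]
    refine setIntegral_congr_fun measurableSet_Ioi fun t _ => ?_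
    simp only [hgdef, smul_smul, ← Real.exp_add]
    congr 2
    ring
  have hsplitI : ∀ y : H, ∀ h : ℝ, 0 < h →
      R y = (∫ t in Set.Ioc (0:ℝ) h, g y t) + ∫ t in Set.Ioi h, g y t := by
    intro y h hh
    rw [hRapp, ← Set.Ioc_union_Ioi_eq_Ioi hh.le]
    exact setIntegral_union (Set.Ioc_disjoint_Ioi le_rfl) measurableSet_Ioi
      ((hg_int y).mono_set Set.Ioc_subset_Ioi_self)
      ((hg_int y).mono_set (Set.Ioi_subset_Ioi hh.le))
  have hvol : ∀ h : ℝ, 0 < h → volume.real (Set.Ioc (0:ℝ) h) = h := by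
    intro h hh
    rw [Real.volume_real_Ioc_of_le hh.le, sub_zero]
  have hsmall : ∀ y : H, ∀ h : ℝ, 0 < h →
      ‖∫ t in Set.Ioc (0:ℝ) h, g y t‖ ≤ (M * ‖y‖) * h := by
    intro y h hh
    have hb : ∀ t ∈ Set.Ioc (0:ℝ) h, ‖g y t‖ ≤ M * ‖y‖ := by
      intro t ht
      refine (hg_bound y t ht.1.le).trans ?_
      have h5 : Real.exp (-t) ≤ 1 := Real.exp_le_one_iff.mpr (by linarith [ht.1])
      have h6 : (0:ℝ) ≤ M * ‖y‖ := mul_nonneg (by linarith) (norm_nonneg _)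
      nlinarith
    have := norm_setIntegral_le_of_norm_le_const (C := M * ‖y‖)
      (by rw [Real.volume_Ioc]; exact ENNReal.ofReal_lt_top) hb
    rwa [hvol h hh] at this
  -- the key limit
  have hkey : ∀ y : H, Filter.Tendsto (fun h : ℝ => h⁻¹ • (S h (R y) - R y))
      (nhdsWithin 0 (Set.Ioi 0)) (nhds (lam • R y - y)) := by
    intro y
    have hexpr : ∀ h : ℝ, 0 < h →
        h⁻¹ • (S h (R y) - R y)
          = (h⁻¹ * (Real.exp (lam * h) - 1)) • (∫ t in Set.Ioi h, g y t)
            - h⁻¹ • ∫ t in Set.Ioc (0:ℝ) h, g y t := by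
      intro h hh
      rw [hJ h hh.le y]
      nth_rewrite 1 [hsplitI y h hh]
      module
    have hA : Filter.Tendsto (fun h : ℝ => h⁻¹ * (Real.exp (lam * h) - 1))
        (nhdsWithin 0 (Set.Ioi 0)) (nhds lam) := by
      have hd : HasDerivAt (fun h : ℝ => Real.exp (lam * h)) lam 0 := by
        have := (Real.hasDerivAt_exp (lam * 0)).comp 0 ((hasDerivAt_id (0:ℝ)).const_mul lam)
        simpa [Function.comp_def] using this
      have hs := hasDerivAt_iff_tendsto_slope.mp hd
      have hmono : nhdsWithin (0:ℝ) (Set.Ioi 0) ≤ nhdsWithin (0:ℝ) {(0:ℝ)}ᶜ :=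
        nhdsWithin_mono 0 fun x hx => ne_of_gt hx
      refine (hs.mono_left hmono).congr fun h => ?_
      rw [slope_def_field]
      simp [div_eq_inv_mul, mul_comm]
    have hT : Filter.Tendsto (fun h : ℝ => ∫ t in Set.Ioi h, g y t)
        (nhdsWithin 0 (Set.Ioi 0)) (nhds (R y)) := by
      have hz : Filter.Tendsto (fun h : ℝ => ∫ t in Set.Ioc (0:ℝ) h, g y t)
          (nhdsWithin 0 (Set.Ioi 0)) (nhds 0) := by
        apply squeeze_zero_norm'
        · filter_upwards [self_mem_nhdsWithin] with h hh
          exact hsmall y h hh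
        · have : Filter.Tendsto (fun h : ℝ => (M * ‖y‖) * h) (nhds (0:ℝ)) (nhds ((M * ‖y‖) * 0)) :=
            (continuous_const.mul continuous_id).tendsto 0
          simpa using this.mono_left nhdsWithin_le_nhds
      have := (tendsto_const_nhds (x := R y) (f := nhdsWithin (0:ℝ) (Set.Ioi 0))).sub hz
      simp only [sub_zero] at this
      refine this.congr' ?_
      filter_upwards [self_mem_nhdsWithin] with h hh
      rw [hsplitI y h hh]; abel
    have hc : Filter.Tendsto (fun h : ℝ => h⁻¹ • ∫ t in Set.Ioc (0:ℝ) h, g y t)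
        (nhdsWithin 0 (Set.Ioi 0)) (nhds y) := by
      rw [Metric.tendsto_nhdsWithin_nhds]
      intro ε hε
      have hg0 : g y 0 = y := by simp [hgdef, hS0]
      have hcw : ContinuousWithinAt (g y) (Set.Ici 0) 0 := (hg_contOn y) 0 Set.self_mem_Ici
      rw [ContinuousWithinAt, hg0, Metric.tendsto_nhdsWithin_nhds] at hcw
      obtain ⟨δ, hδ0, hδ⟩ := hcw (ε/2) (by linarith)
      refine ⟨δ, hδ0, ?_⟩
      intro h hh hd
      have hh0 : (0:ℝ) < h := hh
      have hdh : h < δ := by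
        have := hd
        rw [Real.dist_eq, sub_zero, abs_of_pos hh0] at this
        exact this
      have hconst : (∫ _ in Set.Ioc (0:ℝ) h, y) = h • y := by
        rw [setIntegral_const, hvol h hh0]
      have hsub : (∫ t in Set.Ioc (0:ℝ) h, g y t) - h • y
          = ∫ t in Set.Ioc (0:ℝ) h, (g y t - y) := by
        rw [← hconst, ← integral_sub ((hg_int y).mono_set Set.Ioc_subset_Ioi_self)
          (integrableOn_const (by rw [Real.volume_Ioc]; exact ENNReal.ofReal_ne_top))]
      have hbnd : ‖∫ t in Set.Ioc (0:ℝ) h, (g y t - y)‖ ≤ (ε/2) * h := by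
        have hC1 : ∀ t ∈ Set.Ioc (0:ℝ) h, ‖g y t - y‖ ≤ ε/2 := by
          intro t ht
          have htd : dist t 0 < δ := by
            rw [Real.dist_eq, sub_zero, abs_of_pos ht.1]
            linarith [ht.2]
          have h7 := hδ (Set.mem_Ici.mpr ht.1.le) htd
          rw [dist_eq_norm] at h7
          exact h7.le
        have h8 := norm_setIntegral_le_of_norm_le_const (C := ε/2)
          (by rw [Real.volume_Ioc]; exact ENNReal.ofReal_lt_top) hC1
        rwa [hvol h hh0] at h8
      rw [dist_eq_norm]
      have heq : h⁻¹ • (∫ t in Set.Ioc (0:ℝ) h, g y t) - y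
          = h⁻¹ • ((∫ t in Set.Ioc (0:ℝ) h, g y t) - h • y) := by
        rw [smul_sub, smul_smul, inv_mul_cancel₀ hh0.ne', one_smul]
      rw [heq, hsub]
      calc ‖h⁻¹ • ∫ t in Set.Ioc (0:ℝ) h, (g y t - y)‖
          = h⁻¹ * ‖∫ t in Set.Ioc (0:ℝ) h, (g y t - y)‖ := by
            rw [norm_smul, Real.norm_eq_abs, abs_of_pos (inv_pos.mpr hh0)]
        _ ≤ h⁻¹ * ((ε/2) * h) :=
            mul_le_mul_of_nonneg_left hbnd (inv_pos.mpr hh0).le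
        _ = ε/2 := by field_simp
        _ < ε := by linarith
    have hcomb := (hA.smul hT).sub hc
    refine hcomb.congr' ?_
    filter_upwards [self_mem_nhdsWithin] with h hh
    exact (hexpr h hh).symm
  have hmem : ∀ y : H, R y ∈ domA0 := fun y => (hSdom (R y)).mpr ⟨_, hkey y⟩
  have hval : ∀ y : H, A (R y) = lam • R y - y := fun y =>
    tendsto_nhds_unique (hSgen (R y) (hmem y)) (hkey y)
  have hR2 : ∀ x ∈ domA0, R (A x) = lam • R x - x := by
    intro x hx
    have h1 : Filter.Tendsto (fun h : ℝ => R (h⁻¹ • (S h x - x)))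
        (nhdsWithin 0 (Set.Ioi 0)) (nhds (R (A x))) :=
      (R.continuous.tendsto _).comp (hSgen x hx)
    refine tendsto_nhds_unique (h1.congr' ?_) (hkey x)
    filter_upwards [self_mem_nhdsWithin] with h hh
    rw [ContinuousLinearMap.map_smul_of_tower, map_sub, hcomm2 h hh.le x]
  exact ⟨lam, R, fun y => ⟨hmem y, hval y⟩, hR2⟩

end WS18
namespace WS18
open MeasureTheory intervalIntegral Set Filter Topology
set_option maxHeartbeats 1000000

variable {H : Type*} [NormedAddCommGroup H] [InnerProductSpace ℂ H] [CompleteSpace H]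

theorem homogeneous_zero {S : ℝ → H →L[ℂ] H} {domA0 : Set H} {A : H → H}
    (hS : IsC0SemigroupGeneratedBy S domA0 A)
    {u u' : ℝ → H} {t : ℝ} (ht : 0 < t)
    (hu : ∀ s ∈ Set.Icc (0:ℝ) t, HasDerivWithinAt u (u' s) (Set.Icc 0 t) s)
    (hdom : ∀ s ∈ Set.Icc (0:ℝ) t, u s ∈ domA0)
    (hAu : ∀ s ∈ Set.Icc (0:ℝ) t, A (u s) = u' s)
    (h0 : u 0 = 0) : u t = 0 := by
  obtain ⟨hS0, hSadd, hScont, hSdom, hSgen⟩ := hS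
  obtain ⟨M, ω, hM1, hω0, hbound⟩ := semigroup_bound hS0 hSadd hScont
  set C : ℝ := M * Real.exp (ω * t) with hCdef
  have hCb : ∀ σ : ℝ, 0 ≤ σ → σ ≤ t → ‖S σ‖ ≤ C := by
    intro σ h0σ hσt
    refine (hbound σ h0σ).trans ?_
    have h1 : Real.exp (ω * σ) ≤ Real.exp (ω * t) :=
      Real.exp_le_exp.mpr (mul_le_mul_of_nonneg_left hσt hω0)
    nlinarith [Real.exp_pos (ω * σ)]
  -- the uniform-boundedness continuity lemma
  have hLstar : ∀ (l : Filter ℝ) (ι : ℝ → ℝ) (v : ℝ → H) (τ : ℝ) (v₀ : H),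
      τ ∈ Set.Icc (0:ℝ) t → Filter.Tendsto ι l (nhdsWithin τ (Set.Icc 0 t)) →
      Filter.Tendsto v l (nhds v₀) →
      Filter.Tendsto (fun r => S (ι r) (v r)) l (nhds (S τ v₀)) := by
    intro l ι v τ v₀ hτm hι hv
    have hmem : ∀ᶠ r in l, ι r ∈ Set.Icc (0:ℝ) t := hι self_mem_nhdsWithin
    have hcw : Filter.Tendsto (fun σ => S σ v₀) (nhdsWithin τ (Set.Ici 0)) (nhds (S τ v₀)) :=
      (hScont v₀) τ (Set.mem_Ici.mpr hτm.1)
    have h1 : Filter.Tendsto (fun r => S (ι r) v₀) l (nhds (S τ v₀)) :=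
      hcw.comp (hι.mono_right (nhdsWithin_mono τ fun σ hσ => hσ.1))
    have h2 : Filter.Tendsto (fun r => S (ι r) (v r - v₀)) l (nhds 0) := by
      have h3 : Filter.Tendsto (fun r => v r - v₀) l (nhds (v₀ - v₀)) :=
        hv.sub tendsto_const_nhds
      rw [sub_self] at h3
      have h4 := h3.norm
      rw [norm_zero] at h4
      have h5 := h4.const_mul C
      rw [mul_zero] at h5
      refine squeeze_zero_norm' ?_ h5
      filter_upwards [hmem] with r hr
      exact ((S (ι r)).le_opNorm _).trans
        (mul_le_mul_of_nonneg_right (hCb _ hr.1 hr.2) (norm_nonneg _))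
    have h6 := h2.add h1
    rw [zero_add] at h6
    refine h6.congr fun r => ?_
    rw [map_sub]
    abel
  -- derivative of the semigroup orbit
  have hSderiv : ∀ x ∈ domA0, ∀ τ ∈ Set.Icc (0:ℝ) t,
      HasDerivWithinAt (fun σ => S σ x) (S τ (A x)) (Set.Icc 0 t) τ := by
    intro x hx τ hτm
    rw [hasDerivWithinAt_iff_tendsto_slope]
    have hsplit : Set.Icc (0:ℝ) t \ {τ} =
        (Set.Icc 0 t ∩ Set.Iio τ) ∪ (Set.Icc 0 t ∩ Set.Ioi τ) := by
      ext σ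
      simp only [Set.mem_diff, Set.mem_singleton_iff, Set.mem_union, Set.mem_inter_iff,
        Set.mem_Iio, Set.mem_Ioi]
      constructor
      · rintro ⟨hσ, hne⟩
        rcases lt_or_gt_of_ne hne with h | h
        · exact Or.inl ⟨hσ, h⟩
        · exact Or.inr ⟨hσ, h⟩
      · rintro (⟨hσ, h⟩ | ⟨hσ, h⟩)
        · exact ⟨hσ, ne_of_lt h⟩
        · exact ⟨hσ, ne_of_gt h⟩
    rw [hsplit, nhdsWithin_union, Filter.tendsto_sup]
    constructor
    · -- left limit : σ < τ
      have hι : Filter.Tendsto (fun σ : ℝ => τ - σ)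
          (nhdsWithin τ (Set.Icc 0 t ∩ Set.Iio τ)) (nhdsWithin 0 (Set.Ioi 0)) := by
        rw [tendsto_nhdsWithin_iff]
        constructor
        · have hcont : Continuous (fun σ : ℝ => τ - σ) := continuous_const.sub continuous_id
          have h := (hcont.tendsto τ).mono_left
            (nhdsWithin_le_nhds (s := Set.Icc 0 t ∩ Set.Iio τ))
          rw [sub_self] at h
          exact h
        · filter_upwards [self_mem_nhdsWithin] with σ hσ
          exact Set.mem_Ioi.mpr (sub_pos.mpr hσ.2)
      have hval : Filter.Tendsto (fun σ => (τ - σ)⁻¹ • (S (τ - σ) x - x))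
          (nhdsWithin τ (Set.Icc 0 t ∩ Set.Iio τ)) (nhds (A x)) :=
        (hSgen x hx).comp hι
      have hιid : Filter.Tendsto (fun σ : ℝ => σ)
          (nhdsWithin τ (Set.Icc 0 t ∩ Set.Iio τ)) (nhdsWithin τ (Set.Icc 0 t)) :=
        tendsto_nhdsWithin_mono_right Set.inter_subset_left (Filter.tendsto_id.mono_right le_rfl)
      have hmain := hLstar _ (fun σ => σ) (fun σ => (τ - σ)⁻¹ • (S (τ - σ) x - x)) τ (A x)
        hτm hιid hval
      refine hmain.congr' ?_
      filter_upwards [self_mem_nhdsWithin] with σ hσ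
      have hστ : σ < τ := hσ.2
      have h1 : S τ x = S σ (S (τ - σ) x) := by
        have h2 := hSadd σ (Set.mem_Ici.mpr hσ.1.1) (τ - σ)
          (Set.mem_Ici.mpr (le_of_lt (sub_pos.mpr hστ)))
        rw [add_sub_cancel] at h2
        rw [h2]; rfl
      rw [slope_def_module, ContinuousLinearMap.map_smul_of_tower, map_sub, ← h1]
      rw [show (σ - τ)⁻¹ = -(τ - σ)⁻¹ by rw [← neg_sub τ σ, inv_neg]]
      module
    · -- right limit : σ > τ
      have hι : Filter.Tendsto (fun σ : ℝ => σ - τ)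
          (nhdsWithin τ (Set.Icc 0 t ∩ Set.Ioi τ)) (nhdsWithin 0 (Set.Ioi 0)) := by
        rw [tendsto_nhdsWithin_iff]
        constructor
        · have hcont : Continuous (fun σ : ℝ => σ - τ) := continuous_id.sub continuous_const
          have h := (hcont.tendsto τ).mono_left
            (nhdsWithin_le_nhds (s := Set.Icc 0 t ∩ Set.Ioi τ))
          rw [sub_self] at h
          exact h
        · filter_upwards [self_mem_nhdsWithin] with σ hσ
          exact Set.mem_Ioi.mpr (sub_pos.mpr hσ.2)
      have hval : Filter.Tendsto (fun σ => (σ - τ)⁻¹ • (S (σ - τ) x - x))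
          (nhdsWithin τ (Set.Icc 0 t ∩ Set.Ioi τ)) (nhds (A x)) :=
        (hSgen x hx).comp hι
      have happ : Filter.Tendsto (fun σ : ℝ => S τ ((σ - τ)⁻¹ • (S (σ - τ) x - x)))
          (nhdsWithin τ (Set.Icc 0 t ∩ Set.Ioi τ)) (nhds (S τ (A x))) :=
        ((S τ).continuous.tendsto _).comp hval
      refine happ.congr' ?_
      filter_upwards [self_mem_nhdsWithin] with σ hσ
      have hστ : τ < σ := hσ.2
      have h1 : S σ x = S τ (S (σ - τ) x) := by
        have h2 := hSadd τ (Set.mem_Ici.mpr hτm.1) (σ - τ)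
          (Set.mem_Ici.mpr (le_of_lt (sub_pos.mpr hστ)))
        rw [add_sub_cancel] at h2
        rw [h2]; rfl
      rw [ContinuousLinearMap.map_smul_of_tower, map_sub, ← h1, slope_def_module]
  -- u is continuous on [0,t]
  have hucont : ContinuousOn u (Set.Icc 0 t) := fun s hs => (hu s hs).continuousWithinAt
  -- φ(s) = S (t-s) (u s) has zero derivative
  set φ : ℝ → H := fun s => S (t - s) (u s) with hφdef
  have hφmaps : ∀ s ∈ Set.Icc (0:ℝ) t, t - s ∈ Set.Icc (0:ℝ) t := fun s hs =>
    ⟨by linarith [hs.2], by linarith [hs.1]⟩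
  have hφcont : ContinuousOn φ (Set.Icc 0 t) := by
    intro s hs
    have hι : Filter.Tendsto (fun r : ℝ => t - r) (nhdsWithin s (Set.Icc 0 t))
        (nhdsWithin (t - s) (Set.Icc 0 t)) := by
      rw [tendsto_nhdsWithin_iff]
      constructor
      · have hcont : Continuous (fun r : ℝ => t - r) := continuous_const.sub continuous_id
        exact (hcont.tendsto s).mono_left nhdsWithin_le_nhds
      · filter_upwards [self_mem_nhdsWithin] with r hr
        exact hφmaps r hr
    exact hLstar _ (fun r => t - r) u (t - s) (u s) (hφmaps s hs) hι (hucont s hs).tendsto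
  have hφd : ∀ s ∈ Set.Icc (0:ℝ) t, HasDerivWithinAt φ 0 (Set.Icc 0 t) s := by
    intro s hsm
    have hcomp : HasDerivWithinAt (fun r => S (t - r) (u s))
        (-(S (t - s) (A (u s)))) (Set.Icc 0 t) s := by
      have houter := hSderiv (u s) (hdom s hsm) (t - s) (hφmaps s hsm)
      have hinner : HasDerivWithinAt (fun r : ℝ => t - r) (-1) (Set.Icc 0 t) s :=
        ((hasDerivAt_id s).const_sub t).hasDerivWithinAt
      have hcc := HasDerivWithinAt.scomp s houter hinner fun r hr => hφmaps r hr
      simpa [Function.comp_def] using hcc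
    rw [hasDerivWithinAt_iff_tendsto_slope]
    have hslopeu : Filter.Tendsto (slope u s) (nhdsWithin s (Set.Icc 0 t \ {s}))
        (nhds (u' s)) := hasDerivWithinAt_iff_tendsto_slope.mp (hu s hsm)
    have hι : Filter.Tendsto (fun r : ℝ => t - r) (nhdsWithin s (Set.Icc 0 t \ {s}))
        (nhdsWithin (t - s) (Set.Icc 0 t)) := by
      rw [tendsto_nhdsWithin_iff]
      constructor
      · have hcont : Continuous (fun r : ℝ => t - r) := continuous_const.sub continuous_id
        exact (hcont.tendsto s).mono_left nhdsWithin_le_nhds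
      · filter_upwards [self_mem_nhdsWithin] with r hr
        exact hφmaps r hr.1
    have happly : Filter.Tendsto (fun r => S (t - r) (slope u s r))
        (nhdsWithin s (Set.Icc 0 t \ {s})) (nhds (S (t - s) (u' s))) :=
      hLstar _ (fun r => t - r) (slope u s) (t - s) (u' s) (hφmaps s hsm) hι hslopeu
    have hslopecomp : Filter.Tendsto (slope (fun r => S (t - r) (u s)) s)
        (nhdsWithin s (Set.Icc 0 t \ {s})) (nhds (-(S (t - s) (A (u s))))) :=
      hasDerivWithinAt_iff_tendsto_slope.mp hcomp
    have hsum := happly.add hslopecomp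
    have hlim0 : S (t - s) (u' s) + -(S (t - s) (A (u s))) = 0 := by
      rw [hAu s hsm]; abel
    rw [hlim0] at hsum
    refine hsum.congr fun r => ?_
    simp only [slope_def_module, hφdef, ContinuousLinearMap.map_smul_of_tower, map_sub]
    module
  have hφconst := constant_of_has_deriv_right_zero hφcont fun x hx =>
    (hφd x ⟨hx.1, hx.2.le⟩).mono_of_mem_nhdsWithin (Icc_mem_nhdsGE_of_mem ⟨hx.1, hx.2⟩)
  have hfin := hφconst t (Set.right_mem_Icc.mpr ht.le)
  simp only [hφdef, sub_self, sub_zero, hS0, h0, map_zero] at hfin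
  simpa using hfin

end WS18
namespace WS18
open MeasureTheory intervalIntegral Set Filter Topology

theorem inner_intervalIntegral {H : Type*} [NormedAddCommGroup H] [InnerProductSpace ℂ H]
    [CompleteSpace H] {a b : ℝ} {F : ℝ → H}
    (hF : IntervalIntegrable F volume a b) (z : H) :
    (∫ s in a..b, ⟪z, F s⟫) = ⟪z, ∫ s in a..b, F s⟫ := by
  have := (innerSL ℂ z).intervalIntegral_comp_comm hF
  simpa using this

theorem inner_real_smul_left {H : Type*} [NormedAddCommGroup H] [InnerProductSpace ℂ H]
    (r : ℝ) (x y : H) : ⟪r • x, y⟫ = (r : ℂ) * ⟪x, y⟫ := by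
  rw [← algebraMap_smul ℂ r x, inner_smul_left]
  simp [Complex.conj_ofReal]

theorem inner_real_smul_right {H : Type*} [NormedAddCommGroup H] [InnerProductSpace ℂ H]
    (r : ℝ) (x y : H) : ⟪x, r • y⟫ = (r : ℂ) * ⟪x, y⟫ := by
  rw [← algebraMap_smul ℂ r y, inner_smul_right]
  simp

end WS18

/-- Semigroup property of weak solutions (Theorem 5 of the paper). -/
theorem statement_18 {H : Type*} [NormedAddCommGroup H] [InnerProductSpace ℂ H] [CompleteSpace H]
    [TopologicalSpace.SeparableSpace H]
    {m : ℕ} (hm : 0 < m)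
    (domA : Set H) (A : H → H) (Bop : H → EuclideanSpace ℂ (Fin m))
    (hdomA : ∀ x ∈ domA, ∀ y ∈ domA, ∀ a b : ℂ, a • x + b • y ∈ domA)
    (hAlin : IsLinearOn A domA) (hBoplin : IsLinearOn Bop domA)
    (domAstar : Set H) (Astar : H → H)
    (hdense : Dense {x : H | x ∈ domA ∧ Bop x = 0})
    (hadjdom : ∀ z : H, z ∈ domAstar ↔ ∃ w : H, ∀ x ∈ domA, Bop x = 0 → ⟪w, x⟫ = ⟪z, A x⟫)
    (hadj : ∀ z ∈ domAstar, ∀ x ∈ domA, Bop x = 0 → ⟪Astar z, x⟫ = ⟪z, A x⟫)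
    (B : EuclideanSpace ℂ (Fin m) →L[ℂ] H)
    (hBdom : ∀ v, B v ∈ domA) (hBlift : ∀ v, Bop (B v) = v)
    (hABcont : Continuous fun v => A (B v))
    (S : ℝ → H →L[ℂ] H)
    (hS : IsC0SemigroupGeneratedBy S {x : H | x ∈ domA ∧ Bop x = 0} A)
    (β : ℝ → ℝ → ℝ) (γ1 γ2 : ℝ → ℝ)
    (hβ : ClassKL β) (hγ1 : ClassK γ1) (hγ2 : ClassK γ2)
    (hexist : ∀ (X0 : H) (d : ℝ → EuclideanSpace ℂ (Fin m)) (U : ℝ → H),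
      X0 ∈ domA → ContDiffOn ℝ 2 d (Set.Ici 0) → ContDiffOn ℝ 1 U (Set.Ici 0) → Bop X0 = d 0 →
      ∃ X : ℝ → H, IsClassicalSolution A Bop domA X0 d U X)
    (hISS : ∀ (X0 : H) (d : ℝ → EuclideanSpace ℂ (Fin m)) (U : ℝ → H) (X : ℝ → H),
      X0 ∈ domA → ContDiffOn ℝ 2 d (Set.Ici 0) → ContDiffOn ℝ 1 U (Set.Ici 0) → Bop X0 = d 0 →
      IsClassicalSolution A Bop domA X0 d U X →
      ∀ t ∈ Set.Ici (0:ℝ),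
        ‖X t‖ ≤ β ‖X0‖ t + γ1 (sSup ((fun s => ‖d s‖) '' Set.Icc 0 t))
          + γ2 (sSup ((fun s => ‖U s‖) '' Set.Icc 0 t)))
    (X0 : H) (d : ℝ → EuclideanSpace ℂ (Fin m)) (U : ℝ → H) (X : ℝ → H)
    (hd : ContinuousOn d (Set.Ici 0)) (hU : ContinuousOn U (Set.Ici 0))
    (hX : IsWeakSolution A domAstar Astar B X0 d U X) :
    ∀ t0 > (0:ℝ),
      IsWeakSolution A domAstar Astar B (X t0)
        (fun t => d (t + t0)) (fun t => U (t + t0)) (fun t => X (t + t0)) ∧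
      ∀ Y : ℝ → H,
        IsWeakSolution A domAstar Astar B (X t0)
          (fun t => d (t + t0)) (fun t => U (t + t0)) Y →
        ∀ t ∈ Set.Ici (0:ℝ), Y t = X (t + t0) := by
  intro t0 ht0
  have hmapsTo : Set.MapsTo (fun s : ℝ => s + t0) (Set.Ici 0) (Set.Ici 0) := by
    intro s hs
    simp only [Set.mem_Ici] at *
    linarith
  have hcont_shift : ContinuousOn (fun s : ℝ => s + t0) (Set.Ici 0) :=
    (continuous_id.add continuous_const).continuousOn
  have hXs : ContinuousOn (fun s => X (s + t0)) (Set.Ici 0) := hX.1.comp hcont_shift hmapsTo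
  have hds : ContinuousOn (fun s => d (s + t0)) (Set.Ici 0) := hd.comp hcont_shift hmapsTo
  have hUs : ContinuousOn (fun s => U (s + t0)) (Set.Ici 0) := hU.comp hcont_shift hmapsTo
  -- interval integrability of the scalar integrand for X
  have hint : ∀ z0 : H, ∀ a : ℝ, 0 ≤ a → IntervalIntegrable (fun s =>
      (⟪Astar z0, X s - B (d s)⟫ + ⟪z0, A (B (d s)) + U s⟫)) volume 0 a := by
    intro z0 a ha
    apply ContinuousOn.intervalIntegrable
    rw [Set.uIcc_of_le ha]
    have hIci : Set.Icc (0:ℝ) a ⊆ Set.Ici 0 := fun s hs => hs.1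
    exact (continuousOn_const.inner ((hX.1.mono hIci).sub
        (B.continuous.comp_continuousOn (hd.mono hIci)))).add
      (continuousOn_const.inner ((hABcont.comp_continuousOn (hd.mono hIci)).add (hU.mono hIci)))
  -- scalar identity for the shifted function
  have hshift_sc : ∀ z0 ∈ domAstar, ∀ t : ℝ, 0 ≤ t →
      ⟪z0, X (t + t0)⟫ = ⟪z0, X t0⟫ + ∫ s in (0:ℝ)..t,
        (⟪Astar z0, X (s + t0) - B (d (s + t0))⟫ + ⟪z0, A (B (d (s + t0))) + U (s + t0)⟫) := by
    intro z0 hz0 t ht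
    have h1 := WS18.weak_to_scalar hdense hadjdom hadj hd hU hABcont hX hz0
      (show (0:ℝ) ≤ t + t0 by linarith)
    have h2 := WS18.weak_to_scalar hdense hadjdom hadj hd hU hABcont hX hz0 ht0.le
    have hcov : (∫ s in (0:ℝ)..t,
        (⟪Astar z0, X (s + t0) - B (d (s + t0))⟫ + ⟪z0, A (B (d (s + t0))) + U (s + t0)⟫))
        = ∫ s in t0..(t + t0), (⟪Astar z0, X s - B (d s)⟫ + ⟪z0, A (B (d s)) + U s⟫) := by
      have hc := intervalIntegral.integral_comp_add_right (a := (0:ℝ)) (b := t)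
        (fun s => (⟪Astar z0, X s - B (d s)⟫ + ⟪z0, A (B (d s)) + U s⟫)) t0
      rw [zero_add] at hc
      exact hc
    have hsplit := intervalIntegral.integral_interval_sub_left
      (hint z0 (t + t0) (by linarith)) (hint z0 t0 ht0.le)
    rw [hcov]
    linear_combination h1 - h2 + hsplit
  have hshift_weak : IsWeakSolution A domAstar Astar B (X t0)
      (fun t => d (t + t0)) (fun t => U (t + t0)) (fun t => X (t + t0)) :=
    WS18.scalar_to_weak hds hUs hABcont hXs hshift_sc
  refine ⟨hshift_weak, ?_⟩
  intro Y hY t htmem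
  have ht : (0:ℝ) ≤ t := htmem
  -- the difference of two weak solutions with the same data
  set W : ℝ → H := fun s => Y s - X (s + t0) with hWdef
  have hWc : ContinuousOn W (Set.Ici 0) := hY.1.sub hXs
  have hintY : ∀ z0 : H, ∀ a : ℝ, 0 ≤ a → IntervalIntegrable (fun s =>
      (⟪Astar z0, Y s - B (d (s + t0))⟫ + ⟪z0, A (B (d (s + t0))) + U (s + t0)⟫)) volume 0 a := by
    intro z0 a ha
    apply ContinuousOn.intervalIntegrable
    rw [Set.uIcc_of_le ha]
    have hIci : Set.Icc (0:ℝ) a ⊆ Set.Ici 0 := fun s hs => hs.1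
    exact (continuousOn_const.inner ((hY.1.mono hIci).sub
        (B.continuous.comp_continuousOn (hds.mono hIci)))).add
      (continuousOn_const.inner ((hABcont.comp_continuousOn (hds.mono hIci)).add (hUs.mono hIci)))
  have hintXs : ∀ z0 : H, ∀ a : ℝ, 0 ≤ a → IntervalIntegrable (fun s =>
      (⟪Astar z0, X (s + t0) - B (d (s + t0))⟫ + ⟪z0, A (B (d (s + t0))) + U (s + t0)⟫)) volume 0 a := by
    intro z0 a ha
    apply ContinuousOn.intervalIntegrable
    rw [Set.uIcc_of_le ha]
    have hIci : Set.Icc (0:ℝ) a ⊆ Set.Ici 0 := fun s hs => hs.1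
    exact (continuousOn_const.inner ((hXs.mono hIci).sub
        (B.continuous.comp_continuousOn (hds.mono hIci)))).add
      (continuousOn_const.inner ((hABcont.comp_continuousOn (hds.mono hIci)).add (hUs.mono hIci)))
  have hintW : ∀ z0 : H, ∀ a : ℝ, 0 ≤ a →
      IntervalIntegrable (fun s => ⟪Astar z0, W s⟫) volume 0 a := by
    intro z0 a ha
    apply ContinuousOn.intervalIntegrable
    rw [Set.uIcc_of_le ha]
    exact continuousOn_const.inner (hWc.mono fun s hs => hs.1)
  have hWsc : ∀ z0 ∈ domAstar, ∀ τ : ℝ, 0 ≤ τ →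
      ⟪z0, W τ⟫ = ∫ s in (0:ℝ)..τ, ⟪Astar z0, W s⟫ := by
    intro z0 hz0 τ hτ
    have h1 := WS18.weak_to_scalar hdense hadjdom hadj hds hUs hABcont hY hz0 hτ
    have h2 := WS18.weak_to_scalar hdense hadjdom hadj hds hUs hABcont hshift_weak hz0 hτ
    have hdiff : (∫ s in (0:ℝ)..τ,
          (⟪Astar z0, Y s - B (d (s + t0))⟫ + ⟪z0, A (B (d (s + t0))) + U (s + t0)⟫))
        - (∫ s in (0:ℝ)..τ,
          (⟪Astar z0, X (s + t0) - B (d (s + t0))⟫ + ⟪z0, A (B (d (s + t0))) + U (s + t0)⟫))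
        = ∫ s in (0:ℝ)..τ, ⟪Astar z0, W s⟫ := by
      rw [← intervalIntegral.integral_sub (hintY z0 τ hτ) (hintXs z0 τ hτ)]
      refine intervalIntegral.integral_congr fun s hs => ?_
      simp only [hWdef, inner_sub_right]
      ring
    have hWτ : ⟪z0, W τ⟫ = ⟪z0, Y τ⟫ - ⟪z0, X (τ + t0)⟫ := by
      simp only [hWdef, inner_sub_right]
    rw [hWτ]
    linear_combination h1 - h2 + hdiff
  -- resolvent machinery
  obtain ⟨lam, R, hR1, hR2⟩ := WS18.resolvent_exists hS
  set Rs : H →L[ℂ] H := ContinuousLinearMap.adjoint R with hRsdef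
  have hRs_inner : ∀ z x : H, ⟪Rs z, x⟫ = ⟪z, R x⟫ := fun z x =>
    ContinuousLinearMap.adjoint_inner_left R x z
  have hRs_key : ∀ z x : H, x ∈ domA → Bop x = 0 → ⟪lam • Rs z - z, x⟫ = ⟪Rs z, A x⟫ := by
    intro z x hx hbx
    rw [inner_sub_left, WS18.inner_real_smul_left, hRs_inner, hRs_inner,
      hR2 x ⟨hx, hbx⟩, inner_sub_right, WS18.inner_real_smul_right]
  have hRs_mem : ∀ z : H, Rs z ∈ domAstar := by
    intro z
    rw [hadjdom]
    exact ⟨lam • Rs z - z, fun x hx hbx => hRs_key z x hx hbx⟩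
  have hRs_val : ∀ z : H, Astar (Rs z) = lam • Rs z - z := by
    intro z
    refine WS18.astar_eq hdense hadj (hRs_mem z) fun x hx hbx => hRs_key z x hx hbx
  -- integrability of W and R ∘ W
  have hintWv : ∀ a : ℝ, 0 ≤ a → IntervalIntegrable W volume 0 a := by
    intro a ha
    apply ContinuousOn.intervalIntegrable
    rw [Set.uIcc_of_le ha]
    exact hWc.mono fun s hs => hs.1
  have hintRWv : ∀ a : ℝ, 0 ≤ a → IntervalIntegrable (fun s => R (W s)) volume 0 a := by
    intro a ha
    apply ContinuousOn.intervalIntegrable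
    rw [Set.uIcc_of_le ha]
    exact R.continuous.comp_continuousOn (hWc.mono fun s hs => hs.1)
  -- the vector-valued integral equation for u = R ∘ W
  have hu_eq : ∀ τ : ℝ, 0 ≤ τ →
      R (W τ) = lam • (∫ s in (0:ℝ)..τ, R (W s)) - ∫ s in (0:ℝ)..τ, W s := by
    intro τ hτ
    refine ext_inner_left ℂ fun z => ?_
    have h1 := hWsc (Rs z) (hRs_mem z) τ hτ
    rw [hRs_inner] at h1
    have h2 : (∫ s in (0:ℝ)..τ, ⟪Astar (Rs z), W s⟫)
        = lam • (∫ s in (0:ℝ)..τ, ⟪z, R (W s)⟫) - ∫ s in (0:ℝ)..τ, ⟪z, W s⟫ := by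
      have hintzRW : IntervalIntegrable (fun s => ⟪z, R (W s)⟫) volume 0 τ := by
        apply ContinuousOn.intervalIntegrable
        rw [Set.uIcc_of_le hτ]
        exact continuousOn_const.inner
          (R.continuous.comp_continuousOn (hWc.mono fun s hs => hs.1))
      have hintzW : IntervalIntegrable (fun s => ⟪z, W s⟫) volume 0 τ := by
        apply ContinuousOn.intervalIntegrable
        rw [Set.uIcc_of_le hτ]
        exact continuousOn_const.inner (hWc.mono fun s hs => hs.1)
      have hintzRW2 : IntervalIntegrable (fun s => lam • (⟪z, R (W s)⟫ : ℂ)) volume 0 τ := by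
        apply ContinuousOn.intervalIntegrable
        rw [Set.uIcc_of_le hτ]
        exact (continuousOn_const.inner
          (R.continuous.comp_continuousOn (hWc.mono fun s hs => hs.1))).const_smul lam
      rw [← intervalIntegral.integral_smul, ← intervalIntegral.integral_sub hintzRW2 hintzW]
      refine intervalIntegral.integral_congr fun s hs => ?_
      rw [hRs_val, inner_sub_left, WS18.inner_real_smul_left, hRs_inner]
      simp [Complex.real_smul]
    rw [h2, WS18.inner_intervalIntegral (hintRWv τ hτ) z,
      WS18.inner_intervalIntegral (hintWv τ hτ) z] at h1
    rw [h1, inner_sub_right, WS18.inner_real_smul_right, Complex.real_smul]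
  have hu0 : R (W 0) = 0 := by
    have := hu_eq 0 le_rfl
    simpa using this
  -- u vanishes identically
  have hu_zero : ∀ τ : ℝ, 0 ≤ τ → R (W τ) = 0 := by
    intro τ hτ
    rcases eq_or_lt_of_le hτ with heq | hpos
    · rw [← heq]; exact hu0
    -- clamp to [0, τ]
    set c : ℝ → ℝ := fun s => max 0 (min s τ) with hcdef
    have hc_cont : Continuous c := continuous_const.max (continuous_id.min continuous_const)
    have hc_mem : ∀ s, c s ∈ Set.Icc (0:ℝ) τ := fun s =>
      ⟨le_max_left _ _, max_le hτ (min_le_right _ _)⟩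
    have hc_id : ∀ s ∈ Set.Icc (0:ℝ) τ, c s = s := fun s hs => by
      simp only [hcdef, min_eq_left hs.2, max_eq_right hs.1]
    have hIccIci : Set.Icc (0:ℝ) τ ⊆ Set.Ici 0 := fun s hs => hs.1
    have hWcc : Continuous fun s => W (c s) :=
      hWc.comp_continuous hc_cont fun s => hIccIci (hc_mem s)
    have hucc : Continuous fun s => R (W (c s)) := R.continuous.comp hWcc
    have hu_deriv : ∀ s ∈ Set.Icc (0:ℝ) τ,
        HasDerivWithinAt (fun σ => R (W σ)) (lam • R (W s) - W s) (Set.Icc 0 τ) s := by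
      intro s hsm
      have hP : HasDerivAt (fun σ => lam • (∫ r in (0:ℝ)..σ, R (W (c r)))
          - ∫ r in (0:ℝ)..σ, W (c r)) (lam • R (W (c s)) - W (c s)) s := by
        exact ((hucc.integral_hasStrictDerivAt 0 s).hasDerivAt.const_smul lam).sub
          (hWcc.integral_hasStrictDerivAt 0 s).hasDerivAt
      have heqP : ∀ σ ∈ Set.Icc (0:ℝ) τ, R (W σ)
          = lam • (∫ r in (0:ℝ)..σ, R (W (c r))) - ∫ r in (0:ℝ)..σ, W (c r) := by
        intro σ hσ
        rw [hu_eq σ hσ.1]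
        congr 1
        · congr 1
          refine intervalIntegral.integral_congr fun r hr => ?_
          rw [Set.uIcc_of_le hσ.1] at hr
          rw [hc_id r ⟨hr.1, hr.2.trans hσ.2⟩]
        · refine intervalIntegral.integral_congr fun r hr => ?_
          rw [Set.uIcc_of_le hσ.1] at hr
          rw [hc_id r ⟨hr.1, hr.2.trans hσ.2⟩]
      have hD := HasDerivWithinAt.congr hP.hasDerivWithinAt
        (fun σ hσ => heqP σ hσ) (heqP s hsm)
      rwa [hc_id s hsm] at hD
    have := WS18.homogeneous_zero hS hpos hu_deriv
      (fun s _ => (hR1 (W s)).1) (fun s _ => (hR1 (W s)).2) hu0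
    exact this
  -- conclude W ≡ 0
  have hA0 : A 0 = 0 := by
    have h5 := (hR1 0).2
    rw [map_zero] at h5
    simpa using h5
  have hWzero : W t = 0 := by
    have h5 := (hR1 (W t)).2
    rw [hu_zero t ht, hA0] at h5
    have h6 : W t = 0 := by
      have := h5.symm
      simpa using this
    exact h6
  have : Y t - X (t + t0) = 0 := hWzero
  exact sub_eq_zero.mp this
end
end
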